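/- arXiv:1811.09379 — 5 statements merged into one kernel-verified Lean document; each statement's English description precedes it below -/
import Mathlib

section
/- The collection 𝔇_μ of Buck measurable subsets of ℕ is an algebra of sets (closed under complements and finite unions, containing ℕ), and the restriction μ of μ* to 𝔇_μ is a finitely additive probability measure. -/
open Filter MeasureTheory Topology

/-- The arithmetic progression `r + mℕ₀`. -/
def AP (r m : ℕ) : Set ℕ := {n | ∃ j : ℕ, n = r + j * m}

/-- Buck's measure density: the infimum of `∑ 1/mⱼ` over finite covers of `S` by
arithmetic progressions `rⱼ + mⱼℕ₀`. -/
noncomputable def buckOuter (S : Set ℕ) : ℝ :=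
  sInf {x | ∃ (k : ℕ) (r : Fin k → ℕ) (m : Fin k → ℕ), (∀ j, 0 < m j) ∧
    S ⊆ (⋃ j, AP (r j) (m j)) ∧ x = ∑ j, (1 : ℝ) / (m j)}

/-- A set `S ⊆ ℕ` is Buck measurable if `μ*(S) + μ*(ℕ \ S) = 1`. -/
def BuckMeasurableSet (S : Set ℕ) : Prop := buckOuter S + buckOuter Sᶜ = 1

/-! ### Occupied residue classes -/

open scoped Classical in
/-- The residues `c` modulo `N` occupied by some element of `S`. -/
noncomputable def occ (S : Set ℕ) (N : ℕ) : Finset ℕ :=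
  (Finset.range N).filter (fun c => ∃ n ∈ S, n % N = c)

lemma mem_occ {S : Set ℕ} {N c : ℕ} : c ∈ occ S N ↔ c < N ∧ ∃ n ∈ S, n % N = c := by
  simp [occ]

lemma occ_mono {S T : Set ℕ} (h : S ⊆ T) (N : ℕ) : occ S N ⊆ occ T N := by
  intro c hc
  rw [mem_occ] at hc ⊢
  exact ⟨hc.1, hc.2.imp fun n hn => ⟨h hn.1, hn.2⟩⟩

lemma occ_union (S T : Set ℕ) (N : ℕ) : occ (S ∪ T) N = occ S N ∪ occ T N := by
  ext c
  simp only [Finset.mem_union, mem_occ]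
  constructor
  · rintro ⟨hc, n, hn | hn, rfl⟩
    · exact Or.inl ⟨hc, n, hn, rfl⟩
    · exact Or.inr ⟨hc, n, hn, rfl⟩
  · rintro (⟨hc, n, hn, rfl⟩ | ⟨hc, n, hn, rfl⟩)
    · exact ⟨hc, n, Or.inl hn, rfl⟩
    · exact ⟨hc, n, Or.inr hn, rfl⟩

lemma occ_union_compl (S : Set ℕ) (N : ℕ) : occ S N ∪ occ Sᶜ N = Finset.range N := by
  rw [← occ_union, Set.union_compl_self]
  ext c
  simp only [mem_occ, Finset.mem_range]
  constructor
  · exact fun h => h.1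
  · exact fun h => ⟨h, c, Set.mem_univ c, Nat.mod_eq_of_lt h⟩

lemma occ_empty (N : ℕ) : occ (∅ : Set ℕ) N = ∅ := by
  ext c; simp [mem_occ]

lemma occ_univ (N : ℕ) : occ (Set.univ : Set ℕ) N = Finset.range N := by
  ext c
  simp only [mem_occ, Finset.mem_range]
  exact ⟨fun h => h.1, fun h => ⟨h, c, Set.mem_univ c, Nat.mod_eq_of_lt h⟩⟩

/-! ### Counting residues in a range -/

lemma card_filter_mod {N m r : ℕ} (hm : 0 < m) (hd : m ∣ N) (hr : r < m) :
    ((Finset.range N).filter (fun c => c % m = r)).card = N / m := by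
  obtain ⟨q, rfl⟩ := hd
  rw [Nat.mul_div_cancel_left _ hm]
  have hset : (Finset.range (m * q)).filter (fun c => c % m = r) =
      (Finset.range q).image (fun t => r + t * m) := by
    ext c
    simp only [Finset.mem_filter, Finset.mem_range, Finset.mem_image]
    constructor
    · rintro ⟨hc, hcr⟩
      have h1 : m * (c / m) + r = c := by rw [← hcr]; exact Nat.div_add_mod c m
      refine ⟨c / m, ?_, by rw [mul_comm]; omega⟩
      have h2 : m * (c / m) < m * q := by omega
      exact Nat.lt_of_mul_lt_mul_left h2
    · rintro ⟨t, ht, rfl⟩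
      constructor
      · calc r + t * m < m + t * m := by omega
          _ = m * (t + 1) := by ring
          _ ≤ m * q := Nat.mul_le_mul_left m ht
      · rw [Nat.add_mul_mod_self_right, Nat.mod_eq_of_lt hr]
  rw [hset, Finset.card_image_of_injective _ ?_, Finset.card_range]
  intro a b hab
  have := Nat.add_left_cancel hab
  exact Nat.eq_of_mul_eq_mul_right hm this

lemma occ_card_mul (S : Set ℕ) {N d : ℕ} (hN : 0 < N) (hd : 0 < d) :
    (occ S (N * d)).card ≤ d * (occ S N).card := by
  classical
  have himg : (occ S (N * d)).image (· % N) ⊆ occ S N := by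
    intro b hb
    simp only [Finset.mem_image] at hb
    obtain ⟨c, hc, rfl⟩ := hb
    rw [mem_occ] at hc ⊢
    obtain ⟨hcN, n, hn, rfl⟩ := hc
    exact ⟨Nat.mod_lt _ hN, n, hn, (Nat.mod_mod_of_dvd n ⟨d, rfl⟩).symm ▸ rfl⟩
  calc (occ S (N * d)).card ≤ d * ((occ S (N * d)).image (· % N)).card := by
        apply Finset.card_le_mul_card_image
        intro b hb
        have hsub : (occ S (N * d)).filter (fun a => a % N = b) ⊆
            (Finset.range (N * d)).filter (fun c => c % N = b) := by
          intro c hc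
          simp only [Finset.mem_filter] at hc ⊢
          exact ⟨Finset.mem_range.2 (mem_occ.1 hc.1).1, hc.2⟩
        have hb' : b < N := by
          obtain ⟨c, hc, rfl⟩ := Finset.mem_image.1 hb
          exact Nat.mod_lt _ hN
        calc ((occ S (N * d)).filter (fun a => a % N = b)).card
            ≤ ((Finset.range (N * d)).filter (fun c => c % N = b)).card :=
              Finset.card_le_card hsub
          _ = (N * d) / N := card_filter_mod hN ⟨d, rfl⟩ hb'
          _ = d := Nat.mul_div_cancel_left d hN
    _ ≤ d * (occ S N).card := Nat.mul_le_mul_left d (Finset.card_le_card himg)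

/-! ### `buckOuter` via occupied residue classes -/

/-- Description of Buck's density via occupied residue classes. -/
noncomputable def buckD (S : Set ℕ) : ℝ :=
  sInf {x | ∃ N : ℕ, 0 < N ∧ x = ((occ S N).card : ℝ) / N}

lemma buckD_set_nonempty (S : Set ℕ) :
    {x | ∃ N : ℕ, 0 < N ∧ x = ((occ S N).card : ℝ) / N}.Nonempty :=
  ⟨_, 1, one_pos, rfl⟩

lemma buckD_set_bddBelow (S : Set ℕ) :
    BddBelow {x | ∃ N : ℕ, 0 < N ∧ x = ((occ S N).card : ℝ) / N} := by
  refine ⟨0, fun x hx => ?_⟩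
  obtain ⟨N, hN, rfl⟩ := hx
  positivity

lemma buckOuter_set_nonempty (S : Set ℕ) :
    {x | ∃ (k : ℕ) (r : Fin k → ℕ) (m : Fin k → ℕ), (∀ j, 0 < m j) ∧
      S ⊆ (⋃ j, AP (r j) (m j)) ∧ x = ∑ j, (1 : ℝ) / (m j)}.Nonempty := by
  refine ⟨1, 1, fun _ => 0, fun _ => 1, fun _ => one_pos, ?_, by simp⟩
  intro n _
  exact Set.mem_iUnion.2 ⟨0, n, by simp [AP]⟩

lemma buckOuter_set_bddBelow (S : Set ℕ) :
    BddBelow {x | ∃ (k : ℕ) (r : Fin k → ℕ) (m : Fin k → ℕ), (∀ j, 0 < m j) ∧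
      S ⊆ (⋃ j, AP (r j) (m j)) ∧ x = ∑ j, (1 : ℝ) / (m j)} := by
  refine ⟨0, fun x hx => ?_⟩
  obtain ⟨k, r, m, hm, -, rfl⟩ := hx
  exact Finset.sum_nonneg fun j _ => by positivity

lemma buckD_le (S : Set ℕ) {N : ℕ} (hN : 0 < N) : buckD S ≤ ((occ S N).card : ℝ) / N :=
  csInf_le (buckD_set_bddBelow S) ⟨N, hN, rfl⟩

lemma buckD_nonneg (S : Set ℕ) : 0 ≤ buckD S := by
  apply le_csInf (buckD_set_nonempty S)
  rintro x ⟨N, hN, rfl⟩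
  positivity

lemma buckOuter_eq_buckD (S : Set ℕ) : buckOuter S = buckD S := by
  apply le_antisymm
  · -- from a modulus N, build an explicit cover by the occupied classes
    apply le_csInf (buckD_set_nonempty S)
    rintro x ⟨N, hN, rfl⟩
    apply csInf_le (buckOuter_set_bddBelow S)
    classical
    refine ⟨(occ S N).card, fun j => ((occ S N).equivFin.symm j : ℕ), fun _ => N,
      fun _ => hN, ?_, ?_⟩
    · intro n hn
      have hmem : n % N ∈ occ S N := mem_occ.2 ⟨Nat.mod_lt _ hN, n, hn, rfl⟩
      refine Set.mem_iUnion.2 ⟨(occ S N).equivFin ⟨n % N, hmem⟩, ⟨n / N, ?_⟩⟩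
      simp only [Equiv.symm_apply_apply]
      rw [mul_comm]
      exact (Nat.mod_add_div n N).symm
    · rw [Finset.sum_const, Finset.card_univ, Fintype.card_fin, nsmul_eq_mul]
      rw [one_div, div_eq_mul_inv]
  · -- from a cover, bound the occupied classes modulo the product of the moduli
    apply le_csInf (buckOuter_set_nonempty S)
    rintro x ⟨k, r, m, hm, hcov, rfl⟩
    classical
    set N : ℕ := ∏ j, m j with hNdef
    have hN : 0 < N := Finset.prod_pos fun j _ => hm j
    have hdvd : ∀ j, m j ∣ N := fun j => Finset.dvd_prod_of_mem m (Finset.mem_univ j)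
    have hsub : occ S N ⊆ Finset.univ.biUnion
        (fun j : Fin k => (Finset.range N).filter (fun c => c % m j = r j % m j)) := by
      intro c hc
      obtain ⟨hcN, n, hn, rfl⟩ := mem_occ.1 hc
      obtain ⟨j, hj⟩ := Set.mem_iUnion.1 (hcov hn)
      obtain ⟨t, rfl⟩ := hj
      refine Finset.mem_biUnion.2 ⟨j, Finset.mem_univ j, Finset.mem_filter.2
        ⟨Finset.mem_range.2 hcN, ?_⟩⟩
      rw [Nat.mod_mod_of_dvd _ (hdvd j), Nat.add_mul_mod_self_right]
    have hcard : (occ S N).card ≤ ∑ j, N / m j := by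
      calc (occ S N).card ≤ _ := Finset.card_le_card hsub
        _ ≤ ∑ j, ((Finset.range N).filter (fun c => c % m j = r j % m j)).card :=
          Finset.card_biUnion_le
        _ = ∑ j, N / m j := by
          refine Finset.sum_congr rfl fun j _ => ?_
          exact card_filter_mod (hm j) (hdvd j) (Nat.mod_lt _ (hm j))
    calc buckD S ≤ ((occ S N).card : ℝ) / N := buckD_le S hN
      _ ≤ (∑ j, (N / m j : ℕ) : ℝ) / N := by
          gcongr
          exact_mod_cast hcard
      _ = ∑ j, (1 : ℝ) / m j := by
          rw [Finset.sum_div]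
          refine Finset.sum_congr rfl fun j _ => ?_
          rw [Nat.cast_div (hdvd j) (by exact_mod_cast (hm j).ne')]
          have h1 : (m j : ℝ) ≠ 0 := by exact_mod_cast (hm j).ne'
          have h2 : (N : ℝ) ≠ 0 := by exact_mod_cast hN.ne'
          field_simp

/-! ### Directedness along divisibility -/

lemma buckD_mono_dvd (S : Set ℕ) {N M : ℕ} (hN : 0 < N) (hM : 0 < M) (h : N ∣ M) :
    ((occ S M).card : ℝ) / M ≤ ((occ S N).card : ℝ) / N := by
  obtain ⟨d, rfl⟩ := h
  have hd : 0 < d := by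
    rcases Nat.eq_zero_or_pos d with h | h
    · subst h; simp at hM
    · exact h
  have hcard := occ_card_mul S hN hd
  have hcR : ((occ S (N * d)).card : ℝ) ≤ (d : ℝ) * (occ S N).card := by exact_mod_cast hcard
  rw [div_le_div_iff₀ (by exact_mod_cast hM) (by exact_mod_cast hN)]
  push_cast
  nlinarith [hcR, (by exact_mod_cast hN.le : (0:ℝ) ≤ N)]

lemma exists_witness (S : Set ℕ) {ε : ℝ} (hε : 0 < ε) :
    ∃ N : ℕ, 0 < N ∧ ((occ S N).card : ℝ) / N < buckD S + ε := by
  obtain ⟨x, hx, hlt⟩ := exists_lt_of_csInf_lt (buckD_set_nonempty S)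
    (show buckD S < buckD S + ε by linarith)
  obtain ⟨N, hN, rfl⟩ := hx
  exact ⟨N, hN, hlt⟩

/-- A common modulus which is simultaneously good for four sets. -/
lemma exists_good4 (S₁ S₂ S₃ S₄ : Set ℕ) {ε : ℝ} (hε : 0 < ε) :
    ∃ N : ℕ, 0 < N ∧
      ((occ S₁ N).card : ℝ) / N < buckD S₁ + ε ∧
      ((occ S₂ N).card : ℝ) / N < buckD S₂ + ε ∧
      ((occ S₃ N).card : ℝ) / N < buckD S₃ + ε ∧
      ((occ S₄ N).card : ℝ) / N < buckD S₄ + ε := by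
  obtain ⟨N₁, h₁, hg₁⟩ := exists_witness S₁ hε
  obtain ⟨N₂, h₂, hg₂⟩ := exists_witness S₂ hε
  obtain ⟨N₃, h₃, hg₃⟩ := exists_witness S₃ hε
  obtain ⟨N₄, h₄, hg₄⟩ := exists_witness S₄ hε
  refine ⟨N₁ * N₂ * N₃ * N₄, by positivity, ?_, ?_, ?_, ?_⟩
  · exact lt_of_le_of_lt (buckD_mono_dvd S₁ h₁ (by positivity) ⟨N₂ * N₃ * N₄, by ring⟩) hg₁
  · exact lt_of_le_of_lt (buckD_mono_dvd S₂ h₂ (by positivity) ⟨N₁ * N₃ * N₄, by ring⟩) hg₂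
  · exact lt_of_le_of_lt (buckD_mono_dvd S₃ h₃ (by positivity) ⟨N₁ * N₂ * N₄, by ring⟩) hg₃
  · exact lt_of_le_of_lt (buckD_mono_dvd S₄ h₄ (by positivity) ⟨N₁ * N₂ * N₃, by ring⟩) hg₄

/-! ### Basic values and bounds -/

lemma buckD_univ : buckD (Set.univ : Set ℕ) = 1 := by
  apply le_antisymm
  · have := buckD_le (Set.univ : Set ℕ) one_pos
    simpa [occ_univ] using this
  · apply le_csInf (buckD_set_nonempty _)
    rintro x ⟨N, hN, rfl⟩
    rw [occ_univ, Finset.card_range, div_self (by exact_mod_cast hN.ne')]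

lemma buckD_empty : buckD (∅ : Set ℕ) = 0 := by
  apply le_antisymm
  · have := buckD_le (∅ : Set ℕ) one_pos
    simpa [occ_empty] using this
  · exact buckD_nonneg _

lemma occ_subset_range (S : Set ℕ) (N : ℕ) : occ S N ⊆ Finset.range N :=
  fun c hc => Finset.mem_range.2 (mem_occ.1 hc).1

lemma buckD_le_one (S : Set ℕ) : buckD S ≤ 1 := by
  have h := buckD_le S one_pos
  have hcard : ((occ S 1).card : ℝ) ≤ 1 := by
    have := Finset.card_le_card (occ_subset_range S 1)
    rw [Finset.card_range] at this
    exact_mod_cast this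
  calc buckD S ≤ ((occ S 1).card : ℝ) / (1:ℕ) := h
    _ ≤ 1 := by rw [Nat.cast_one, div_one]; exact hcard

/-- The count of "ambiguous" classes: `|occ S N| + |occ Sᶜ N| = N + |occ S N ∩ occ Sᶜ N|`. -/
lemma occ_card_add_compl (S : Set ℕ) (N : ℕ) :
    (occ S N).card + (occ Sᶜ N).card = N + (occ S N ∩ occ Sᶜ N).card := by
  classical
  have := Finset.card_union_add_card_inter (occ S N) (occ Sᶜ N)
  rw [occ_union_compl, Finset.card_range] at this
  omega

lemma one_le_buckD_add_compl (S : Set ℕ) : 1 ≤ buckD S + buckD Sᶜ := by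
  apply le_of_forall_pos_le_add
  intro ε hε
  have hε2 : 0 < ε / 2 := by linarith
  obtain ⟨N, hN, h₁, h₂, -, -⟩ := exists_good4 S Sᶜ S S hε2
  have hNR : (0:ℝ) < N := by exact_mod_cast hN
  have hcard : (N : ℝ) ≤ (occ S N).card + (occ Sᶜ N).card := by
    have := occ_card_add_compl S N
    have : N ≤ (occ S N).card + (occ Sᶜ N).card := by omega
    exact_mod_cast this
  have : (1:ℝ) ≤ ((occ S N).card : ℝ) / N + ((occ Sᶜ N).card : ℝ) / N := by
    rw [← add_div, le_div_iff₀ hNR, one_mul]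
    exact hcard
  linarith

/-- Bad classes of a union are bad for one of the parts. -/
lemma inter_occ_union_subset (S T : Set ℕ) (N : ℕ) :
    occ (S ∪ T) N ∩ occ (S ∪ T)ᶜ N ⊆
      (occ S N ∩ occ Sᶜ N) ∪ (occ T N ∩ occ Tᶜ N) := by
  classical
  intro c hc
  rw [Finset.mem_inter] at hc
  obtain ⟨h1, h2⟩ := hc
  rw [mem_occ] at h1 h2
  obtain ⟨hcN, n, hn, rfl⟩ := h1
  obtain ⟨-, n', hn', hn'c⟩ := h2
  rw [Set.compl_union] at hn'
  rcases hn with hn | hn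
  · refine Finset.mem_union_left _ (Finset.mem_inter.2 ⟨mem_occ.2 ⟨hcN, n, hn, rfl⟩,
      mem_occ.2 ⟨hcN, n', hn'.1, hn'c⟩⟩)
  · refine Finset.mem_union_right _ (Finset.mem_inter.2 ⟨mem_occ.2 ⟨hcN, n, hn, rfl⟩,
      mem_occ.2 ⟨hcN, n', hn'.2, hn'c⟩⟩)

/-! ### Main lemmas -/

lemma buckMeasurable_iff (S : Set ℕ) : BuckMeasurableSet S ↔ buckD S + buckD Sᶜ = 1 := by
  rw [BuckMeasurableSet, buckOuter_eq_buckD, buckOuter_eq_buckD]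

lemma buckMeasurable_union {S T : Set ℕ} (hS : BuckMeasurableSet S) (hT : BuckMeasurableSet T) :
    BuckMeasurableSet (S ∪ T) := by
  rw [buckMeasurable_iff] at hS hT ⊢
  apply le_antisymm _ (one_le_buckD_add_compl _)
  apply le_of_forall_pos_le_add
  intro ε hε
  have hε4 : 0 < ε / 4 := by linarith
  obtain ⟨N, hN, h₁, h₂, h₃, h₄⟩ := exists_good4 S Sᶜ T Tᶜ hε4
  have hNR : (0:ℝ) < N := by exact_mod_cast hN
  classical
  -- counting
  have key : ((occ (S ∪ T) N).card : ℝ) + ((occ (S ∪ T)ᶜ N).card : ℝ) ≤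
      (N : ℝ) + ((occ S N ∩ occ Sᶜ N).card : ℝ) + ((occ T N ∩ occ Tᶜ N).card : ℝ) := by
    have e1 : (occ (S ∪ T) N).card + (occ (S ∪ T)ᶜ N).card =
        N + (occ (S ∪ T) N ∩ occ (S ∪ T)ᶜ N).card := occ_card_add_compl _ N
    have e2 : (occ (S ∪ T) N ∩ occ (S ∪ T)ᶜ N).card ≤
        (occ S N ∩ occ Sᶜ N).card + (occ T N ∩ occ Tᶜ N).card :=
      le_trans (Finset.card_le_card (inter_occ_union_subset S T N)) (Finset.card_union_le _ _)
    have : (occ (S ∪ T) N).card + (occ (S ∪ T)ᶜ N).card ≤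
        N + ((occ S N ∩ occ Sᶜ N).card + (occ T N ∩ occ Tᶜ N).card) := by omega
    have h3 : (occ (S ∪ T) N).card + (occ (S ∪ T)ᶜ N).card ≤
        N + (occ S N ∩ occ Sᶜ N).card + (occ T N ∩ occ Tᶜ N).card := by omega
    exact_mod_cast h3
  have eS : ((occ S N ∩ occ Sᶜ N).card : ℝ) = (occ S N).card + (occ Sᶜ N).card - N := by
    have := occ_card_add_compl S N
    have : ((occ S N).card : ℝ) + (occ Sᶜ N).card = N + (occ S N ∩ occ Sᶜ N).card := by
      exact_mod_cast this
    linarith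
  have eT : ((occ T N ∩ occ Tᶜ N).card : ℝ) = (occ T N).card + (occ Tᶜ N).card - N := by
    have := occ_card_add_compl T N
    have : ((occ T N).card : ℝ) + (occ Tᶜ N).card = N + (occ T N ∩ occ Tᶜ N).card := by
      exact_mod_cast this
    linarith
  have hU1 : buckD (S ∪ T) ≤ ((occ (S ∪ T) N).card : ℝ) / N := buckD_le _ hN
  have hU2 : buckD (S ∪ T)ᶜ ≤ ((occ (S ∪ T)ᶜ N).card : ℝ) / N := buckD_le _ hN
  -- now combine
  have hbS : ((occ S N).card : ℝ) / N + ((occ Sᶜ N).card : ℝ) / N < 1 + ε / 2 := by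
    have := hS
    linarith
  have hbT : ((occ T N).card : ℝ) / N + ((occ Tᶜ N).card : ℝ) / N < 1 + ε / 2 := by
    have := hT
    linarith
  have hdiv : (((occ (S ∪ T) N).card : ℝ) + ((occ (S ∪ T)ᶜ N).card : ℝ)) / N ≤
      1 + (((occ S N).card : ℝ) / N + ((occ Sᶜ N).card : ℝ) / N - 1)
        + (((occ T N).card : ℝ) / N + ((occ Tᶜ N).card : ℝ) / N - 1) := by
    rw [div_le_iff₀ hNR]
    have expand : (1 + (((occ S N).card : ℝ) / N + ((occ Sᶜ N).card : ℝ) / N - 1)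
        + (((occ T N).card : ℝ) / N + ((occ Tᶜ N).card : ℝ) / N - 1)) * N =
        (N : ℝ) + (((occ S N).card : ℝ) + (occ Sᶜ N).card - N)
          + (((occ T N).card : ℝ) + (occ Tᶜ N).card - N) := by
      field_simp
    rw [expand]
    linarith [key, eS, eT]
  calc buckD (S ∪ T) + buckD (S ∪ T)ᶜ
      ≤ ((occ (S ∪ T) N).card : ℝ) / N + ((occ (S ∪ T)ᶜ N).card : ℝ) / N := by
        linarith
    _ = (((occ (S ∪ T) N).card : ℝ) + ((occ (S ∪ T)ᶜ N).card : ℝ)) / N := by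
        rw [add_div]
    _ ≤ 1 + (((occ S N).card : ℝ) / N + ((occ Sᶜ N).card : ℝ) / N - 1)
        + (((occ T N).card : ℝ) / N + ((occ Tᶜ N).card : ℝ) / N - 1) := hdiv
    _ ≤ 1 + ε := by linarith

lemma buckD_additive {S T : Set ℕ} (hS : BuckMeasurableSet S) (hT : BuckMeasurableSet T)
    (hST : Disjoint S T) : buckD (S ∪ T) = buckD S + buckD T := by
  rw [buckMeasurable_iff] at hS hT
  apply le_antisymm
  · -- subadditivity
    apply le_of_forall_pos_le_add
    intro ε hε
    have hε2 : 0 < ε / 2 := by linarith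
    obtain ⟨N, hN, h₁, -, h₃, -⟩ := exists_good4 S Sᶜ T Tᶜ hε2
    have hNR : (0:ℝ) < N := by exact_mod_cast hN
    classical
    have hcard : ((occ (S ∪ T) N).card : ℝ) ≤ (occ S N).card + (occ T N).card := by
      rw [occ_union]
      exact_mod_cast Finset.card_union_le _ _
    have := buckD_le (S ∪ T) hN
    have hsum : ((occ (S ∪ T) N).card : ℝ) / N ≤
        ((occ S N).card : ℝ) / N + ((occ T N).card : ℝ) / N := by
      rw [← add_div, div_le_div_iff₀ hNR hNR]
      nlinarith [hcard]
    linarith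
  · -- superadditivity, using disjointness and measurability of S
    apply le_of_forall_pos_le_add
    intro ε hε
    have hε3 : 0 < ε / 3 := by linarith
    obtain ⟨N, hN, h₁, h₂, h₃, -⟩ := exists_good4 S Sᶜ (S ∪ T) (S ∪ T) hε3
    have hNR : (0:ℝ) < N := by exact_mod_cast hN
    classical
    -- occupied classes of S and T mod N intersect only in ambiguous classes of S
    have hint : occ S N ∩ occ T N ⊆ occ S N ∩ occ Sᶜ N := by
      intro c hc
      rw [Finset.mem_inter] at hc ⊢
      refine ⟨hc.1, occ_mono ?_ N hc.2⟩
      exact fun n hn => (hST.subset_compl_left) hn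
    have hunion : occ S N ∪ occ T N = occ (S ∪ T) N := (occ_union S T N).symm
    have hcards : (occ S N).card + (occ T N).card ≤
        (occ (S ∪ T) N).card + (occ S N ∩ occ Sᶜ N).card := by
      have := Finset.card_union_add_card_inter (occ S N) (occ T N)
      have h2 := Finset.card_le_card hint
      rw [hunion] at this
      omega
    have hbad : ((occ S N ∩ occ Sᶜ N).card : ℝ) / N < 2 * (ε / 3) := by
      have e : ((occ S N ∩ occ Sᶜ N).card : ℝ) = (occ S N).card + (occ Sᶜ N).card - N := by
        have := occ_card_add_compl S N
        have : ((occ S N).card : ℝ) + (occ Sᶜ N).card = N + (occ S N ∩ occ Sᶜ N).card := by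
          exact_mod_cast this
        linarith
      rw [e]
      have : ((occ S N).card : ℝ) / N + ((occ Sᶜ N).card : ℝ) / N < 1 + 2 * (ε / 3) := by
        linarith [hS]
      rw [sub_div, add_div, div_self hNR.ne']
      linarith
    have hSl : buckD S ≤ ((occ S N).card : ℝ) / N := buckD_le S hN
    have hTl : buckD T ≤ ((occ T N).card : ℝ) / N := buckD_le T hN
    have hcardsR : ((occ S N).card : ℝ) / N + ((occ T N).card : ℝ) / N ≤
        ((occ (S ∪ T) N).card : ℝ) / N + ((occ S N ∩ occ Sᶜ N).card : ℝ) / N := by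
      rw [← add_div, ← add_div, div_le_div_iff₀ hNR hNR]
      have : ((occ S N).card : ℝ) + (occ T N).card ≤
          ((occ (S ∪ T) N).card : ℝ) + (occ S N ∩ occ Sᶜ N).card := by exact_mod_cast hcards
      nlinarith [this]
    linarith

theorem buck_algebra_and_finitely_additive :
    BuckMeasurableSet (Set.univ : Set ℕ) ∧
    (∀ S : Set ℕ, BuckMeasurableSet S → BuckMeasurableSet Sᶜ) ∧
    (∀ S T : Set ℕ, BuckMeasurableSet S → BuckMeasurableSet T → BuckMeasurableSet (S ∪ T)) ∧
    buckOuter (Set.univ : Set ℕ) = 1 ∧ buckOuter (∅ : Set ℕ) = 0 ∧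
    (∀ S : Set ℕ, BuckMeasurableSet S → 0 ≤ buckOuter S ∧ buckOuter S ≤ 1) ∧
    (∀ S T : Set ℕ, BuckMeasurableSet S → BuckMeasurableSet T → Disjoint S T →
      buckOuter (S ∪ T) = buckOuter S + buckOuter T) := by
  have huniv : buckOuter (Set.univ : Set ℕ) = 1 := by
    rw [buckOuter_eq_buckD, buckD_univ]
  have hempty : buckOuter (∅ : Set ℕ) = 0 := by
    rw [buckOuter_eq_buckD, buckD_empty]
  refine ⟨?_, ?_, ?_, huniv, hempty, ?_, ?_⟩
  · rw [BuckMeasurableSet, huniv, Set.compl_univ, hempty]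
    norm_num
  · intro S hS
    rw [BuckMeasurableSet, compl_compl, add_comm]
    exact hS
  · intro S T hS hT
    exact buckMeasurable_union hS hT
  · intro S _
    rw [buckOuter_eq_buckD]
    exact ⟨buckD_nonneg S, buckD_le_one S⟩
  · intro S T hS hT hST
    rw [buckOuter_eq_buckD, buckOuter_eq_buckD, buckOuter_eq_buckD]
    exact buckD_additive hS hT hST
end

section
/- Every Buck measurable set S ⊆ ℕ has an asymptotic density, and d(S) = μ(S), where μ is Buck's measure density. -/
open Filter MeasureTheory Topology

/-- The number of elements of `A` among `0, ..., N-1`, as a real number. -/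
noncomputable def countBelow (A : Set ℕ) (N : ℕ) : ℝ :=
  ∑ n ∈ Finset.range N, Set.indicator A (fun _ => (1 : ℝ)) n

/-- `A ⊆ ℕ` has asymptotic density `d`. -/
def HasDensity (A : Set ℕ) (d : ℝ) : Prop :=
  Tendsto (fun N : ℕ => countBelow A N / N) atTop (nhds d)

/-- The upper asymptotic density of `A`. -/
noncomputable def upperDensity (A : Set ℕ) : ℝ :=
  Filter.limsup (fun N : ℕ => countBelow A N / N) atTop

/-- `F` is the asymptotic distribution function of the sequence `v`. -/
def HasADF (v : ℕ → ℝ) (F : ℝ → ℝ) : Prop := ∀ x : ℝ, HasDensity {n | v n < x} (F x)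

lemma countBelow_nonneg (A : Set ℕ) (N : ℕ) : 0 ≤ countBelow A N :=
  Finset.sum_nonneg fun i _ => Set.indicator_nonneg (fun _ _ => zero_le_one) i

lemma countBelow_eq_card (A : Set ℕ) (N : ℕ) [DecidablePred (· ∈ A)] :
    countBelow A N = ((Finset.range N).filter (· ∈ A)).card := by
  unfold countBelow
  rw [← Finset.sum_boole]
  refine Finset.sum_congr rfl fun n _ => ?_
  by_cases h : n ∈ A <;> simp [Set.indicator_apply, h]

lemma countBelow_AP_le (r m N : ℕ) (hm : 0 < m) :
    countBelow (AP r m) N ≤ (N : ℝ) / m + 1 := by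
  classical
  rw [countBelow_eq_card]
  have hsub : (Finset.range N).filter (· ∈ AP r m) ⊆
      (Finset.range (N / m + 1)).image (fun j => r + j * m) := by
    intro n hn
    simp only [Finset.mem_filter, Finset.mem_range] at hn
    obtain ⟨hnN, j, hj⟩ := hn
    refine Finset.mem_image.2 ⟨j, Finset.mem_range.2 ?_, hj.symm⟩
    have hjm : j * m ≤ N := by omega
    have := (Nat.le_div_iff_mul_le hm).2 hjm
    omega
  have hcard : ((Finset.range N).filter (· ∈ AP r m)).card ≤ N / m + 1 :=
    le_trans (Finset.card_le_card hsub)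
      (le_trans Finset.card_image_le (by simp))
  calc (((Finset.range N).filter (· ∈ AP r m)).card : ℝ) ≤ ((N / m + 1 : ℕ) : ℝ) := by
        exact_mod_cast hcard
    _ ≤ (N : ℝ) / m + 1 := by
        push_cast
        have := Nat.cast_div_le (α := ℝ) (m := N) (n := m)
        linarith

lemma countBelow_add_compl (S : Set ℕ) (N : ℕ) :
    countBelow S N + countBelow Sᶜ N = N := by
  classical
  unfold countBelow
  rw [← Finset.sum_add_distrib]
  have : ∀ n : ℕ, Set.indicator S (fun _ => (1:ℝ)) n +
      Set.indicator Sᶜ (fun _ => (1:ℝ)) n = 1 := by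
    intro n; by_cases h : n ∈ S <;> simp [Set.indicator_apply, h]
  simp [this]

lemma cover_bound (S : Set ℕ) (k : ℕ) (r m : Fin k → ℕ) (hm : ∀ j, 0 < m j)
    (hcov : S ⊆ ⋃ j, AP (r j) (m j)) (N : ℕ) :
    countBelow S N ≤ N * (∑ j, (1:ℝ) / (m j)) + k := by
  have h1 : countBelow S N ≤ ∑ j, countBelow (AP (r j) (m j)) N := by
    unfold countBelow
    rw [Finset.sum_comm]
    refine Finset.sum_le_sum fun n _ => ?_
    by_cases h : n ∈ S
    · obtain ⟨_, ⟨j, rfl⟩, hj⟩ := hcov h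
      have : Set.indicator (AP (r j) (m j)) (fun _ => (1:ℝ)) n = 1 := by
        simp [Set.indicator_apply, hj]
      calc Set.indicator S (fun _ => (1:ℝ)) n = 1 := by simp [Set.indicator_apply, h]
        _ = Set.indicator (AP (r j) (m j)) (fun _ => (1:ℝ)) n := this.symm
        _ ≤ _ := Finset.single_le_sum
            (f := fun i => Set.indicator (AP (r i) (m i)) (fun _ => (1:ℝ)) n)
            (fun i _ => Set.indicator_nonneg (fun _ _ => zero_le_one) n)
            (Finset.mem_univ j)
    · rw [Set.indicator_of_notMem h]
      exact Finset.sum_nonneg fun i _ => Set.indicator_nonneg (fun _ _ => zero_le_one) n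
  have h2 : ∑ j, countBelow (AP (r j) (m j)) N ≤ ∑ j, ((N : ℝ) / (m j) + 1) :=
    Finset.sum_le_sum fun j _ => countBelow_AP_le (r j) (m j) N (hm j)
  have h3 : ∑ j, ((N : ℝ) / (m j) + 1) = N * (∑ j, (1:ℝ) / (m j)) + k := by
    rw [Finset.sum_add_distrib, Finset.mul_sum]
    simp [div_eq_mul_inv]
  linarith

lemma buckOuter_exists_cover (S : Set ℕ) {ε : ℝ} (hε : 0 < ε) :
    ∃ (k : ℕ) (r : Fin k → ℕ) (m : Fin k → ℕ), (∀ j, 0 < m j) ∧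
      S ⊆ (⋃ j, AP (r j) (m j)) ∧ ∑ j, (1 : ℝ) / (m j) < buckOuter S + ε := by
  have hne : {x | ∃ (k : ℕ) (r : Fin k → ℕ) (m : Fin k → ℕ), (∀ j, 0 < m j) ∧
      S ⊆ (⋃ j, AP (r j) (m j)) ∧ x = ∑ j, (1 : ℝ) / (m j)}.Nonempty := by
    refine ⟨1, 1, fun _ => 0, fun _ => 1, fun _ => one_pos, ?_, by simp⟩
    intro n _
    exact Set.mem_iUnion.2 ⟨0, ⟨n, by simp⟩⟩
  obtain ⟨x, ⟨k, r, m, hm, hcov, rfl⟩, hx⟩ := Real.lt_sInf_add_pos hne hε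
  exact ⟨k, r, m, hm, hcov, hx⟩

theorem buckMeasurable_hasDensity (S : Set ℕ) (hS : BuckMeasurableSet S) :
    HasDensity S (buckOuter S) := by
  rw [HasDensity, Metric.tendsto_atTop]
  intro ε hε
  have hε2 : 0 < ε / 2 := by linarith
  obtain ⟨k₁, r₁, m₁, hm₁, hcov₁, hx₁⟩ := buckOuter_exists_cover S hε2
  obtain ⟨k₂, r₂, m₂, hm₂, hcov₂, hx₂⟩ := buckOuter_exists_cover Sᶜ hε2
  have hcompl : buckOuter Sᶜ = 1 - buckOuter S := by
    rw [BuckMeasurableSet] at hS; linarith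
  obtain ⟨N₀, hN₀⟩ := exists_nat_gt (max 1 (2 * ((k₁ : ℝ) + k₂) / ε))
  refine ⟨N₀, fun N hN => ?_⟩
  have hNN₀ : (N₀ : ℝ) ≤ N := Nat.cast_le.2 hN
  have hN1 : (1 : ℝ) < N := lt_of_le_of_lt (le_max_left _ _) (lt_of_lt_of_le hN₀ hNN₀)
  have hNpos : (0 : ℝ) < N := by linarith
  have hNbig : 2 * ((k₁ : ℝ) + k₂) / ε < N :=
    lt_of_le_of_lt (le_max_right _ _) (lt_of_lt_of_le hN₀ hNN₀)
  have hkN : 2 * ((k₁ : ℝ) + k₂) < N * ε := by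
    rw [div_lt_iff₀ hε] at hNbig; linarith
  have hk₁N : (k₁ : ℝ) / N < ε / 2 := by
    rw [div_lt_iff₀ hNpos]
    have h0 : (0 : ℝ) ≤ (k₂ : ℝ) := Nat.cast_nonneg _
    nlinarith
  have hk₂N : (k₂ : ℝ) / N < ε / 2 := by
    rw [div_lt_iff₀ hNpos]
    have h0 : (0 : ℝ) ≤ (k₁ : ℝ) := Nat.cast_nonneg _
    nlinarith
  -- upper bound
  have hub : countBelow S N / N < buckOuter S + ε := by
    have h := cover_bound S k₁ r₁ m₁ hm₁ hcov₁ N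
    have : countBelow S N / N ≤ ∑ j, (1:ℝ) / (m₁ j) + k₁ / N := by
      rw [div_le_iff₀ hNpos]
      calc countBelow S N ≤ N * (∑ j, (1:ℝ) / (m₁ j)) + k₁ := h
        _ = (∑ j, (1:ℝ) / (m₁ j) + k₁ / N) * N := by field_simp
    linarith
  -- lower bound
  have hlb : buckOuter S - ε < countBelow S N / N := by
    have h := cover_bound Sᶜ k₂ r₂ m₂ hm₂ hcov₂ N
    have hsum := countBelow_add_compl S N
    have hc : countBelow Sᶜ N / N ≤ ∑ j, (1:ℝ) / (m₂ j) + k₂ / N := by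
      rw [div_le_iff₀ hNpos]
      calc countBelow Sᶜ N ≤ N * (∑ j, (1:ℝ) / (m₂ j)) + k₂ := h
        _ = (∑ j, (1:ℝ) / (m₂ j) + k₂ / N) * N := by field_simp
    have heq : countBelow S N / N = 1 - countBelow Sᶜ N / N := by
      field_simp
      linarith
    rw [heq]
    have : countBelow Sᶜ N / N < 1 - buckOuter S + ε := by
      calc countBelow Sᶜ N / N ≤ ∑ j, (1:ℝ) / (m₂ j) + k₂ / N := hc
        _ < buckOuter Sᶜ + ε / 2 + ε / 2 := by linarith
        _ = 1 - buckOuter S + ε := by rw [hcompl]; ring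
    linarith
  rw [Real.dist_eq, abs_lt]
  constructor <;> linarith
end

section
/- Let v_k, w_k (k ∈ ℕ) be two families of sequences with values in a closed interval [a,b] such that for each k the pair (v_k, w_k) is statistically independent. If v_k → v and w_k → w uniformly (in n), then v and w are statistically independent. -/
open Filter MeasureTheory Topology

/-- The average of the first `N` terms of a sequence. -/
noncomputable def seqAvg (v : ℕ → ℝ) (N : ℕ) : ℝ := (∑ n ∈ Finset.range N, v n) / N

/-- `v` has mean value `E`. -/
def HasMeanValue (v : ℕ → ℝ) (E : ℝ) : Prop := Tendsto (seqAvg v) atTop (nhds E)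

/-- Two bounded sequences are statistically independent: for every closed interval containing
the values of both and all functions continuous on it, the correlation of averages vanishes. -/
def StatIndep (v w : ℕ → ℝ) : Prop :=
  ∀ a b : ℝ, (∀ n, v n ∈ Set.Icc a b) → (∀ n, w n ∈ Set.Icc a b) →
    ∀ g g₁ : ℝ → ℝ, ContinuousOn g (Set.Icc a b) → ContinuousOn g₁ (Set.Icc a b) →
      Tendsto (fun N => seqAvg (fun n => g (v n)) N * seqAvg (fun n => g₁ (w n)) N -
        seqAvg (fun n => g (v n) * g₁ (w n)) N) atTop (nhds 0)

lemma seqAvg_sub (u u' : ℕ → ℝ) (N : ℕ) :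
    seqAvg u N - seqAvg u' N = seqAvg (fun n => u n - u' n) N := by
  simp [seqAvg, Finset.sum_sub_distrib, sub_div]

lemma abs_seqAvg_le {u : ℕ → ℝ} {ε : ℝ} (hε : 0 ≤ ε) (h : ∀ n, |u n| ≤ ε) (N : ℕ) :
    |seqAvg u N| ≤ ε := by
  rcases Nat.eq_zero_or_pos N with rfl | hN
  · simpa [seqAvg] using hε
  · rw [seqAvg, abs_div, abs_of_nonneg (by positivity : (0:ℝ) ≤ (N:ℝ)),
      div_le_iff₀ (by positivity)]
    calc |∑ n ∈ Finset.range N, u n| ≤ ∑ n ∈ Finset.range N, |u n| :=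
          Finset.abs_sum_le_sum_abs _ _
      _ ≤ ∑ _n ∈ Finset.range N, ε := Finset.sum_le_sum fun n _ => h n
      _ = ε * N := by simp [mul_comm]

theorem statIndep_of_uniform_limits (a b : ℝ) (v w : ℕ → ℕ → ℝ) (vl wl : ℕ → ℝ)
    (hv : ∀ k n, v k n ∈ Set.Icc a b) (hw : ∀ k n, w k n ∈ Set.Icc a b)
    (hind : ∀ k, StatIndep (v k) (w k))
    (hvu : ∀ ε > (0 : ℝ), ∃ K : ℕ, ∀ k ≥ K, ∀ n, |v k n - vl n| < ε)
    (hwu : ∀ ε > (0 : ℝ), ∃ K : ℕ, ∀ k ≥ K, ∀ n, |w k n - wl n| < ε) :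
    StatIndep vl wl := by
  intro a' b' hvl hwl g g₁ hg hg₁
  have hab' : a' ≤ b' := le_trans (hvl 0).1 (hvl 0).2
  -- clamp to [a', b']
  set p : ℝ → ℝ := fun x => max a' (min b' x) with hp_def
  have hpc : Continuous p := continuous_const.max (continuous_const.min continuous_id)
  have hpmem : ∀ x, p x ∈ Set.Icc a' b' := fun x =>
    ⟨le_max_left _ _, max_le hab' (min_le_left _ _)⟩
  have hpeq : ∀ x ∈ Set.Icc a' b', p x = x := fun x hx => by
    simp only [hp_def]; rw [min_eq_right hx.2, max_eq_right hx.1]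
  set G : ℝ → ℝ := fun x => g (p x) with hG_def
  set G₁ : ℝ → ℝ := fun x => g₁ (p x) with hG₁_def
  have hGc : Continuous G := by
    rw [← continuousOn_univ]
    exact hg.comp hpc.continuousOn (fun x _ => hpmem x)
  have hG₁c : Continuous G₁ := by
    rw [← continuousOn_univ]
    exact hg₁.comp hpc.continuousOn (fun x _ => hpmem x)
  have hveq : ∀ n, g (vl n) = G (vl n) := fun n =>
    (congrArg g (hpeq _ (hvl n))).symm
  have hweq : ∀ n, g₁ (wl n) = G₁ (wl n) := fun n =>
    (congrArg g₁ (hpeq _ (hwl n))).symm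
  simp only [hveq, hweq]
  -- big interval
  set c : ℝ := min a a' with hc_def
  set d : ℝ := max b b' with hd_def
  have hvmem : ∀ k n, v k n ∈ Set.Icc c d := fun k n =>
    ⟨le_trans (min_le_left _ _) (hv k n).1, le_trans (hv k n).2 (le_max_left _ _)⟩
  have hwmem : ∀ k n, w k n ∈ Set.Icc c d := fun k n =>
    ⟨le_trans (min_le_left _ _) (hw k n).1, le_trans (hw k n).2 (le_max_left _ _)⟩
  have hvlmem : ∀ n, vl n ∈ Set.Icc c d := fun n =>
    ⟨le_trans (min_le_right _ _) (hvl n).1, le_trans (hvl n).2 (le_max_right _ _)⟩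
  have hwlmem : ∀ n, wl n ∈ Set.Icc c d := fun n =>
    ⟨le_trans (min_le_right _ _) (hwl n).1, le_trans (hwl n).2 (le_max_right _ _)⟩
  have hcompact : IsCompact (Set.Icc c d) := isCompact_Icc
  have hGu : UniformContinuousOn G (Set.Icc c d) :=
    hcompact.uniformContinuousOn_of_continuous hGc.continuousOn
  have hG₁u : UniformContinuousOn G₁ (Set.Icc c d) :=
    hcompact.uniformContinuousOn_of_continuous hG₁c.continuousOn
  obtain ⟨M₀, hM₀⟩ := hcompact.exists_bound_of_continuousOn hGc.continuousOn
  obtain ⟨M₁, hM₁⟩ := hcompact.exists_bound_of_continuousOn hG₁c.continuousOn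
  set M : ℝ := max 1 (max M₀ M₁) with hM_def
  have hM1 : (1:ℝ) ≤ M := le_max_left _ _
  have hMpos : (0:ℝ) < M := lt_of_lt_of_le one_pos hM1
  have hGb : ∀ x ∈ Set.Icc c d, |G x| ≤ M := fun x hx =>
    le_trans (by simpa [Real.norm_eq_abs] using hM₀ x hx)
      (le_trans (le_max_left _ _) (le_max_right _ _))
  have hG₁b : ∀ x ∈ Set.Icc c d, |G₁ x| ≤ M := fun x hx =>
    le_trans (by simpa [Real.norm_eq_abs] using hM₁ x hx)
      (le_trans (le_max_right _ _) (le_max_right _ _))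
  rw [Metric.tendsto_atTop]
  intro ε hε
  set ε₁ : ℝ := ε / (4 * M + 2) with hε₁_def
  have hε₁pos : 0 < ε₁ := by positivity
  have hfinal : 4 * M * ε₁ + ε₁ < ε := by
    have : (4 * M + 1) * ε₁ < (4 * M + 2) * ε₁ := by nlinarith
    have h2 : (4 * M + 2) * ε₁ = ε := by
      have h42 : (4 * M + 2) ≠ 0 := by linarith
      rw [hε₁_def]; field_simp
    nlinarith
  -- moduli of uniform continuity
  rw [Metric.uniformContinuousOn_iff] at hGu hG₁u
  obtain ⟨δ₀, hδ₀pos, hδ₀⟩ := hGu ε₁ hε₁pos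
  obtain ⟨δ₁, hδ₁pos, hδ₁⟩ := hG₁u ε₁ hε₁pos
  set δ : ℝ := min δ₀ δ₁ with hδ_def
  have hδpos : 0 < δ := lt_min hδ₀pos hδ₁pos
  obtain ⟨K₀, hK₀⟩ := hvu δ hδpos
  obtain ⟨K₁, hK₁⟩ := hwu δ hδpos
  set k : ℕ := max K₀ K₁ with hk_def
  have h1 : ∀ n, |G (v k n) - G (vl n)| ≤ ε₁ := fun n => by
    have := hδ₀ (v k n) (hvmem k n) (vl n) (hvlmem n)
      (by rw [Real.dist_eq]; exact lt_of_lt_of_le (hK₀ k (le_max_left _ _) n) (min_le_left _ _))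
    rw [Real.dist_eq] at this
    exact this.le
  have h2 : ∀ n, |G₁ (w k n) - G₁ (wl n)| ≤ ε₁ := fun n => by
    have := hδ₁ (w k n) (hwmem k n) (wl n) (hwlmem n)
      (by rw [Real.dist_eq]; exact lt_of_lt_of_le (hK₁ k (le_max_right _ _) n) (min_le_right _ _))
    rw [Real.dist_eq] at this
    exact this.le
  -- independence of the k-th pair
  have hindk := hind k c d (hvmem k) (hwmem k) G G₁ hGc.continuousOn hG₁c.continuousOn
  rw [Metric.tendsto_atTop] at hindk
  obtain ⟨N₀, hN₀⟩ := hindk ε₁ hε₁pos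
  refine ⟨N₀, fun N hN => ?_⟩
  have hDk := hN₀ N hN
  rw [Real.dist_eq, sub_zero] at hDk ⊢
  -- abbreviations
  set A : ℝ := seqAvg (fun n => G (vl n)) N with hA
  set B : ℝ := seqAvg (fun n => G₁ (wl n)) N with hB
  set C : ℝ := seqAvg (fun n => G (vl n) * G₁ (wl n)) N with hC
  set A' : ℝ := seqAvg (fun n => G (v k n)) N with hA'
  set B' : ℝ := seqAvg (fun n => G₁ (w k n)) N with hB'
  set C' : ℝ := seqAvg (fun n => G (v k n) * G₁ (w k n)) N with hC'
  have hAA' : |A - A'| ≤ ε₁ := by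
    rw [hA, hA', seqAvg_sub]
    exact abs_seqAvg_le hε₁pos.le (fun n => by
      rw [show G (vl n) - G (v k n) = -(G (v k n) - G (vl n)) by ring, abs_neg]
      exact h1 n) N
  have hBB' : |B - B'| ≤ ε₁ := by
    rw [hB, hB', seqAvg_sub]
    exact abs_seqAvg_le hε₁pos.le (fun n => by
      rw [show G₁ (wl n) - G₁ (w k n) = -(G₁ (w k n) - G₁ (wl n)) by ring, abs_neg]
      exact h2 n) N
  have hAbd : |A'| ≤ M := abs_seqAvg_le hMpos.le (fun n => hGb _ (hvmem k n)) N
  have hBbd : |B| ≤ M := abs_seqAvg_le hMpos.le (fun n => hG₁b _ (hwlmem n)) N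
  have hCC' : |C - C'| ≤ 2 * M * ε₁ := by
    rw [hC, hC', seqAvg_sub]
    refine abs_seqAvg_le (by positivity) (fun n => ?_) N
    have key : G (vl n) * G₁ (wl n) - G (v k n) * G₁ (w k n)
        = G (vl n) * (G₁ (wl n) - G₁ (w k n)) + (G (vl n) - G (v k n)) * G₁ (w k n) := by ring
    rw [key]
    calc |G (vl n) * (G₁ (wl n) - G₁ (w k n)) + (G (vl n) - G (v k n)) * G₁ (w k n)|
        ≤ |G (vl n) * (G₁ (wl n) - G₁ (w k n))| + |(G (vl n) - G (v k n)) * G₁ (w k n)| :=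
          abs_add_le _ _
      _ = |G (vl n)| * |G₁ (wl n) - G₁ (w k n)| + |G (vl n) - G (v k n)| * |G₁ (w k n)| := by
          rw [abs_mul, abs_mul]
      _ ≤ M * ε₁ + ε₁ * M := by
          refine add_le_add (mul_le_mul (hGb _ (hvlmem n)) ?_ (abs_nonneg _) hMpos.le)
            (mul_le_mul ?_ (hG₁b _ (hwmem k n)) (abs_nonneg _) hε₁pos.le)
          · rw [show G₁ (wl n) - G₁ (w k n) = -(G₁ (w k n) - G₁ (wl n)) by ring, abs_neg]
            exact h2 n
          · rw [show G (vl n) - G (v k n) = -(G (v k n) - G (vl n)) by ring, abs_neg]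
            exact h1 n
      _ = 2 * M * ε₁ := by ring
  have hprod : |A * B - A' * B'| ≤ 2 * M * ε₁ := by
    have key : A * B - A' * B' = (A - A') * B + A' * (B - B') := by ring
    rw [key]
    calc |(A - A') * B + A' * (B - B')| ≤ |(A - A') * B| + |A' * (B - B')| := abs_add_le _ _
      _ = |A - A'| * |B| + |A'| * |B - B'| := by rw [abs_mul, abs_mul]
      _ ≤ ε₁ * M + M * ε₁ := add_le_add
          (mul_le_mul hAA' hBbd (abs_nonneg _) hε₁pos.le)
          (mul_le_mul hAbd hBB' (abs_nonneg _) hMpos.le)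
      _ = 2 * M * ε₁ := by ring
  calc |A * B - C| = |(A * B - A' * B') - (C - C') + (A' * B' - C')| := by ring_nf
    _ ≤ |(A * B - A' * B') - (C - C')| + |A' * B' - C'| := abs_add_le _ _
    _ ≤ |A * B - A' * B'| + |C - C'| + |A' * B' - C'| :=
        add_le_add_left (abs_sub _ _) _
    _ ≤ 2 * M * ε₁ + 2 * M * ε₁ + ε₁ := by
        refine add_le_add (add_le_add hprod hCC') hDk.le
    _ = 4 * M * ε₁ + ε₁ := by ring
    _ < ε := hfinal
end

section
/- If v₁, ..., v_k are independent bounded sequences with continuous asymptotic distribution functions, all having the same mean value E and the same dispersion D², then d({n ∈ ℕ : |(v₁(n)+⋯+v_k(n))/k − E| ≥ ε}) ≤ D²/(kε²) for every ε > 0. -/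
open Filter MeasureTheory Topology

/-- A finite family of sequences is independent: for arbitrary intervals `Iⱼ` each preimage
set has an asymptotic density and the joint preimage set has the product density. -/
def IndepFamily {k : ℕ} (v : Fin k → ℕ → ℝ) : Prop :=
  ∀ I : Fin k → Set ℝ, (∀ j, (I j).OrdConnected) →
    ∃ d : Fin k → ℝ, (∀ j, HasDensity {n | v j n ∈ I j} (d j)) ∧
      HasDensity {n | ∀ j, v j n ∈ I j} (∏ j, d j)

lemma seqAvg_add (v w : ℕ → ℝ) (N : ℕ) :
    seqAvg (fun n => v n + w n) N = seqAvg v N + seqAvg w N := by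
  simp [seqAvg, Finset.sum_add_distrib, add_div]

lemma seqAvg_mul (c : ℝ) (v : ℕ → ℝ) (N : ℕ) :
    seqAvg (fun n => c * v n) N = c * seqAvg v N := by
  simp [seqAvg, ← Finset.mul_sum, mul_div_assoc]

lemma HasMeanValue.add {v w : ℕ → ℝ} {a b : ℝ} (hv : HasMeanValue v a)
    (hw : HasMeanValue w b) : HasMeanValue (fun n => v n + w n) (a + b) := by
  exact Filter.Tendsto.congr (fun N => (seqAvg_add v w N).symm) (Filter.Tendsto.add hv hw)

lemma HasMeanValue.const_mul {v : ℕ → ℝ} {a : ℝ} (c : ℝ) (hv : HasMeanValue v a) :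
    HasMeanValue (fun n => c * v n) (c * a) := by
  exact Filter.Tendsto.congr (fun N => (seqAvg_mul c v N).symm) (Filter.Tendsto.const_mul c hv)

lemma hasMeanValue_const (c : ℝ) : HasMeanValue (fun _ => c) c := by
  have h : (fun N => seqAvg (fun _ => c) N) =ᶠ[atTop] fun _ => c := by
    filter_upwards [eventually_gt_atTop 0] with N hN
    have : (N : ℝ) ≠ 0 := Nat.cast_ne_zero.mpr hN.ne'
    simp [seqAvg, this]
  exact Tendsto.congr' h.symm tendsto_const_nhds

lemma hasMeanValue_sum {ι : Type*} (s : Finset ι) (v : ι → ℕ → ℝ) (a : ι → ℝ)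
    (h : ∀ i ∈ s, HasMeanValue (v i) (a i)) :
    HasMeanValue (fun n => ∑ i ∈ s, v i n) (∑ i ∈ s, a i) := by
  classical
  induction s using Finset.induction_on with
  | empty => simpa using hasMeanValue_const 0
  | @insert x s' hx ih =>
    rw [Finset.sum_insert hx]
    have := (h x (Finset.mem_insert_self x s')).add
      (ih fun i hi => h i (Finset.mem_insert_of_mem hi))
    simpa [Finset.sum_insert hx] using this

lemma HasMeanValue.congr {v w : ℕ → ℝ} {a : ℝ} (hv : HasMeanValue v a)
    (h : ∀ n, v n = w n) : HasMeanValue w a := by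
  have : v = w := funext h
  rwa [← this]

lemma hasDensity_unique {A : Set ℕ} {d d' : ℝ} (h : HasDensity A d) (h' : HasDensity A d') :
    d = d' := tendsto_nhds_unique h h'

lemma hasDensity_univ : HasDensity Set.univ 1 := by
  have h : (fun N : ℕ => countBelow Set.univ N / N) =ᶠ[atTop] fun _ => 1 := by
    filter_upwards [eventually_gt_atTop 0] with N hN
    have : (N : ℝ) ≠ 0 := Nat.cast_ne_zero.mpr hN.ne'
    simp [countBelow, this]
  exact Tendsto.congr' h.symm tendsto_const_nhds

lemma avg_abs_le (f : ℕ → ℝ) (c : ℝ) (hc : 0 ≤ c) (h : ∀ n, |f n| ≤ c) (N : ℕ) :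
    |(∑ n ∈ Finset.range N, f n) / N| ≤ c := by
  rcases Nat.eq_zero_or_pos N with hN | hN
  · simp [hN, hc]
  · have hN' : (0:ℝ) < N := by exact_mod_cast hN
    rw [abs_div, abs_of_pos hN', div_le_iff₀ hN']
    calc |∑ n ∈ Finset.range N, f n| ≤ ∑ n ∈ Finset.range N, |f n| :=
          Finset.abs_sum_le_sum_abs _ _
      _ ≤ ∑ _n ∈ Finset.range N, c := Finset.sum_le_sum fun n _ => h n
      _ = c * N := by simp [mul_comm]

lemma abs_seqAvg_le_s12 (f : ℕ → ℝ) (c : ℝ) (hc : 0 ≤ c) (h : ∀ n, |f n| ≤ c) (N : ℕ) :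
    |seqAvg f N| ≤ c := avg_abs_le f c hc h N

lemma abs_mean_le {f : ℕ → ℝ} {c E : ℝ} (hc : 0 ≤ c) (h : ∀ n, |f n| ≤ c)
    (hE : HasMeanValue f E) : |E| ≤ c := by
  have : Tendsto (fun N => |seqAvg f N|) atTop (nhds |E|) := hE.abs
  exact le_of_tendsto this (Eventually.of_forall fun N => abs_seqAvg_le_s12 f c hc h N)

set_option maxHeartbeats 1600000 in
lemma indep_mean_mul (k : ℕ) (v : Fin k → ℕ → ℝ) (C : ℝ) (hb : ∀ j n, |v j n| ≤ C)
    (hind : IndepFamily v) (E : ℝ) (hE : ∀ j, HasMeanValue (v j) E)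
    (i j : Fin k) (hij : i ≠ j) :
    HasMeanValue (fun n => v i n * v j n) (E * E) := by
  classical
  have hC : 0 ≤ C := le_trans (abs_nonneg _) (hb i 0)
  have hEC : |E| ≤ C := abs_mean_le hC (hb i) (hE i)
  rw [HasMeanValue, Metric.tendsto_atTop]
  intro ε hε
  set L : ℝ := C + 1 with hLdef
  have hL : 0 < L := by positivity
  have hCL : C < L := by simp [hLdef]
  obtain ⟨m, hm⟩ := exists_nat_gt (24 * L ^ 2 / ε)
  have hm0 : 0 < m := by
    have : (0:ℝ) ≤ 24 * L ^ 2 / ε := by positivity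
    exact_mod_cast Nat.cast_pos.mp (lt_of_le_of_lt this hm)
  have hm0' : (0:ℝ) < m := by exact_mod_cast hm0
  set δ : ℝ := 2 * L / m with hδdef
  have hδ : 0 < δ := by positivity
  have hmδ : (m:ℝ) * δ = 2 * L := by rw [hδdef]; field_simp
  have hhalf : 6 * L * δ < ε / 2 := by
    have h1 : 24 * L ^ 2 / ε < m := hm
    have h2 : 24 * L ^ 2 < m * ε := by
      rwa [div_lt_iff₀ hε] at h1
    have : 6 * L * δ = 12 * L ^ 2 / m := by
      rw [hδdef]; ring
    rw [this, div_lt_iff₀ hm0']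
    nlinarith
  set a : ℕ → ℝ := fun r => -L + r * δ with hadef
  set I : ℕ → Set ℝ := fun r => Set.Ico (a r) (a r + δ) with hIdef
  set ρ : ℝ → ℕ := fun x => ⌊(x + L) / δ⌋₊ with hρdef
  have hbound : ∀ x, |x| ≤ C → -L < x ∧ x < L := by
    intro x hx
    constructor
    · linarith [neg_abs_le x]
    · linarith [le_abs_self x]
  have hynn : ∀ x, |x| ≤ C → 0 ≤ (x + L) / δ := by
    intro x hx
    have h1 := (hbound x hx).1
    have : 0 ≤ x + L := by linarith
    positivity
  have mem_rho : ∀ x, |x| ≤ C → x ∈ I (ρ x) := by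
    intro x hx
    have hy := hynn x hx
    have hfl : (⌊(x + L) / δ⌋₊ : ℝ) ≤ (x + L) / δ := Nat.floor_le hy
    have hfl2 : (x + L) / δ < ⌊(x + L) / δ⌋₊ + 1 := Nat.lt_floor_add_one _
    constructor
    · have : (⌊(x + L) / δ⌋₊ : ℝ) * δ ≤ x + L := by
        rw [← le_div_iff₀ hδ]; exact hfl
      simp only [hadef, hρdef]; linarith
    · have : x + L < ((⌊(x + L) / δ⌋₊ : ℝ) + 1) * δ := by
        rw [← div_lt_iff₀ hδ]; exact hfl2
      simp only [hadef, hρdef]; nlinarith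
  have rho_lt : ∀ x, |x| ≤ C → ρ x < m := by
    intro x hx
    have hy := hynn x hx
    rw [hρdef]
    rw [Nat.floor_lt hy, div_lt_iff₀ hδ]
    have := (hbound x hx).2
    nlinarith [hmδ]
  have uniq : ∀ x r, x ∈ I r → r = ρ x := by
    intro x r hr
    obtain ⟨h1, h2⟩ := hr
    have ha1 : (r:ℝ) * δ ≤ x + L := by
      simp only [hadef] at h1; linarith
    have ha2 : x + L < ((r:ℝ) + 1) * δ := by
      simp only [hadef] at h2; linarith
    have hy0 : 0 ≤ (x + L) / δ := by
      have : (0:ℝ) ≤ (r:ℝ) * δ := by positivity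
      have : (0:ℝ) ≤ x + L := le_trans this ha1
      positivity
    symm
    rw [hρdef]
    rw [Nat.floor_eq_iff hy0]
    constructor
    · rw [le_div_iff₀ hδ]; exact ha1
    · rw [div_lt_iff₀ hδ]; exact ha2
  have abs_a : ∀ r, r < m → |a r| ≤ L := by
    intro r hr
    rw [abs_le]
    constructor
    · simp only [hadef]
      have : (0:ℝ) ≤ (r:ℝ) * δ := by positivity
      linarith
    · simp only [hadef]
      have hrm : (r:ℝ) ≤ m := by exact_mod_cast hr.le
      nlinarith [hmδ]
  have key : ∀ r s : ℕ, ∃ α β : ℝ, HasDensity {n | v i n ∈ I r} α ∧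
      HasDensity {n | v j n ∈ I s} β ∧
      HasDensity {n | v i n ∈ I r ∧ v j n ∈ I s} (α * β) := by
    intro r s
    set If : Fin k → Set ℝ := fun l => if l = i then I r else if l = j then I s else Set.univ
      with hIf
    have hoc : ∀ l, (If l).OrdConnected := by
      intro l
      simp only [hIf]
      split_ifs
      · exact Set.ordConnected_Ico
      · exact Set.ordConnected_Ico
      · exact Set.ordConnected_univ
    obtain ⟨d, hd1, hd2⟩ := hind If hoc
    have hdi : HasDensity {n | v i n ∈ I r} (d i) := by
      have := hd1 i; simpa [hIf] using this
    have hdj : HasDensity {n | v j n ∈ I s} (d j) := by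
      have := hd1 j; simpa [hIf, hij.symm] using this
    refine ⟨d i, d j, hdi, hdj, ?_⟩
    have h1 : ∀ l, l ≠ i → l ≠ j → d l = 1 := by
      intro l hl1 hl2
      have := hd1 l
      simp only [hIf, if_neg hl1, if_neg hl2] at this
      have huniv : {n : ℕ | v l n ∈ (Set.univ : Set ℝ)} = Set.univ := by
        ext n; simp
      rw [huniv] at this
      exact hasDensity_unique this hasDensity_univ
    have hprod : ∏ l, d l = d i * d j := by
      rw [← Finset.prod_pair hij]
      refine (Finset.prod_subset (Finset.subset_univ _) ?_).symm
      intro x _ hx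
      simp only [Finset.mem_insert, Finset.mem_singleton, not_or] at hx
      exact h1 x hx.1 hx.2
    have hset : {n : ℕ | ∀ l, v l n ∈ If l} = {n | v i n ∈ I r ∧ v j n ∈ I s} := by
      ext n
      simp only [Set.mem_setOf_eq, hIf]
      constructor
      · intro h
        refine ⟨by simpa using h i, ?_⟩
        have := h j
        simpa [if_neg hij.symm] using this
      · rintro ⟨h1', h2'⟩ l
        split_ifs with e1 e2
        · subst e1; exact h1'
        · subst e2; exact h2'
        · trivial
    rw [hprod, hset] at hd2
    exact hd2
  choose α' β' hα' hβ' hjoint using key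
  set α : ℕ → ℝ := fun r => α' r 0 with hαdef
  set β : ℕ → ℝ := fun s => β' 0 s with hβdef
  have hα : ∀ r, HasDensity {n | v i n ∈ I r} (α r) := fun r => hα' r 0
  have hβ : ∀ s, HasDensity {n | v j n ∈ I s} (β s) := fun s => hβ' 0 s
  have hAB : ∀ r s, HasDensity {n | v i n ∈ I r ∧ v j n ∈ I s} (α r * β s) := by
    intro r s
    have h := hjoint r s
    rwa [hasDensity_unique (hα' r s) (hα r), hasDensity_unique (hβ' r s) (hβ s)] at h
  -- pointwise step identities
  have hpt1 : ∀ (l : Fin k) (g : ℕ → ℝ) (n : ℕ),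
      ∑ r ∈ Finset.range m, g r * Set.indicator {n' | v l n' ∈ I r} (fun _ => (1:ℝ)) n
        = g (ρ (v l n)) := by
    intro l g n
    rw [Finset.sum_eq_single_of_mem (ρ (v l n)) (Finset.mem_range.mpr (rho_lt _ (hb l n)))]
    · rw [Set.indicator_of_mem
        (show n ∈ {n' | v l n' ∈ I (ρ (v l n))} from mem_rho _ (hb l n))]; ring
    · intro r _ hne
      rw [Set.indicator_of_notMem, mul_zero]
      intro hmem
      exact hne (uniq _ _ hmem)
  have hpt2 : ∀ n : ℕ, ∑ r ∈ Finset.range m, ∑ s ∈ Finset.range m,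
      (a r * a s) * Set.indicator {n' | v i n' ∈ I r ∧ v j n' ∈ I s} (fun _ => (1:ℝ)) n
        = a (ρ (v i n)) * a (ρ (v j n)) := by
    intro n
    rw [Finset.sum_eq_single_of_mem (ρ (v i n)) (Finset.mem_range.mpr (rho_lt _ (hb i n)))]
    · rw [Finset.sum_eq_single_of_mem (ρ (v j n)) (Finset.mem_range.mpr (rho_lt _ (hb j n)))]
      · rw [Set.indicator_of_mem
          (show n ∈ {n' | v i n' ∈ I (ρ (v i n)) ∧ v j n' ∈ I (ρ (v j n))} from
            ⟨mem_rho _ (hb i n), mem_rho _ (hb j n)⟩)]; ring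
      · intro s _ hne
        rw [Set.indicator_of_notMem, mul_zero]
        rintro ⟨_, h2⟩
        exact hne (uniq _ _ h2)
    · intro r _ hne
      apply Finset.sum_eq_zero
      intro s _
      rw [Set.indicator_of_notMem, mul_zero]
      rintro ⟨h1, _⟩
      exact hne (uniq _ _ h1)
  -- sum identities
  have hS1 : ∀ (l : Fin k) (N : ℕ),
      ∑ n ∈ Finset.range N, a (ρ (v l n))
        = ∑ r ∈ Finset.range m, a r * countBelow {n | v l n ∈ I r} N := by
    intro l N
    unfold countBelow
    simp_rw [Finset.mul_sum]
    rw [Finset.sum_comm]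
    exact (Finset.sum_congr rfl fun n _ => (hpt1 l a n).symm)
  have hS2 : ∀ N : ℕ,
      ∑ n ∈ Finset.range N, a (ρ (v i n)) * a (ρ (v j n))
        = ∑ r ∈ Finset.range m, ∑ s ∈ Finset.range m,
            (a r * a s) * countBelow {n | v i n ∈ I r ∧ v j n ∈ I s} N := by
    intro N
    unfold countBelow
    simp_rw [Finset.mul_sum]
    rw [Finset.sum_congr rfl fun r (_ : r ∈ Finset.range m) => Finset.sum_comm, Finset.sum_comm]
    exact (Finset.sum_congr rfl fun n _ => (hpt2 n).symm)
  -- the step averages and their limits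
  set Pn : ℕ → ℝ := fun N =>
    (∑ r ∈ Finset.range m, a r * countBelow {n | v i n ∈ I r} N) / N with hPndef
  set Qn : ℕ → ℝ := fun N =>
    (∑ s ∈ Finset.range m, a s * countBelow {n | v j n ∈ I s} N) / N with hQndef
  set Rn : ℕ → ℝ := fun N =>
    (∑ r ∈ Finset.range m, ∑ s ∈ Finset.range m,
      (a r * a s) * countBelow {n | v i n ∈ I r ∧ v j n ∈ I s} N) / N with hRndef
  set PL : ℝ := ∑ r ∈ Finset.range m, a r * α r with hPLdef
  set QL : ℝ := ∑ s ∈ Finset.range m, a s * β s with hQLdef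
  have hPn : Tendsto Pn atTop (nhds PL) := by
    have : ∀ N : ℕ, Pn N = ∑ r ∈ Finset.range m,
        a r * (countBelow {n | v i n ∈ I r} N / N) := by
      intro N; simp [hPndef, Finset.sum_div, mul_div_assoc]
    rw [show Pn = fun N => ∑ r ∈ Finset.range m,
        a r * (countBelow {n | v i n ∈ I r} N / N) from funext this]
    exact tendsto_finset_sum _ fun r _ => (hα r).const_mul (a r)
  have hQn : Tendsto Qn atTop (nhds QL) := by
    have : ∀ N : ℕ, Qn N = ∑ s ∈ Finset.range m,
        a s * (countBelow {n | v j n ∈ I s} N / N) := by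
      intro N; simp [hQndef, Finset.sum_div, mul_div_assoc]
    rw [show Qn = fun N => ∑ s ∈ Finset.range m,
        a s * (countBelow {n | v j n ∈ I s} N / N) from funext this]
    exact tendsto_finset_sum _ fun s _ => (hβ s).const_mul (a s)
  have hRn : Tendsto Rn atTop (nhds (PL * QL)) := by
    have heq : ∀ N : ℕ, Rn N = ∑ r ∈ Finset.range m, ∑ s ∈ Finset.range m,
        (a r * a s) * (countBelow {n | v i n ∈ I r ∧ v j n ∈ I s} N / N) := by
      intro N
      simp [hRndef, Finset.sum_div, mul_div_assoc]
    have hlim : PL * QL = ∑ r ∈ Finset.range m, ∑ s ∈ Finset.range m,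
        (a r * a s) * (α r * β s) := by
      rw [hPLdef, hQLdef, Finset.sum_mul_sum]
      exact Finset.sum_congr rfl fun r _ => Finset.sum_congr rfl fun s _ => by ring
    rw [show Rn = fun N => ∑ r ∈ Finset.range m, ∑ s ∈ Finset.range m,
        (a r * a s) * (countBelow {n | v i n ∈ I r ∧ v j n ∈ I s} N / N) from funext heq,
      hlim]
    exact tendsto_finset_sum _ fun r _ => tendsto_finset_sum _ fun s _ =>
      (hAB r s).const_mul (a r * a s)
  -- approximation bounds
  have hnear : ∀ (l : Fin k) (n : ℕ), |v l n - a (ρ (v l n))| ≤ δ := by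
    intro l n
    obtain ⟨h1, h2⟩ := mem_rho _ (hb l n)
    rw [abs_le]; constructor <;> linarith
  have b1 : ∀ (l : Fin k) (N : ℕ),
      |seqAvg (v l) N - (∑ r ∈ Finset.range m, a r * countBelow {n | v l n ∈ I r} N) / N|
        ≤ δ := by
    intro l N
    rw [← hS1, seqAvg, div_sub_div_same, ← Finset.sum_sub_distrib]
    exact avg_abs_le _ δ hδ.le (fun n => hnear l n) N
  have hPE : |PL - E| ≤ δ := by
    have h1 : Tendsto (fun N => |seqAvg (v i) N - Pn N|) atTop (nhds |E - PL|) :=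
      ((hE i).sub hPn).abs
    have h2 : |E - PL| ≤ δ := le_of_tendsto h1 (Eventually.of_forall fun N => b1 i N)
    rwa [abs_sub_comm] at h2
  have hQE : |QL - E| ≤ δ := by
    have h1 : Tendsto (fun N => |seqAvg (v j) N - Qn N|) atTop (nhds |E - QL|) :=
      ((hE j).sub hQn).abs
    have h2 : |E - QL| ≤ δ := le_of_tendsto h1 (Eventually.of_forall fun N => b1 j N)
    rwa [abs_sub_comm] at h2
  have b2 : ∀ N : ℕ, |seqAvg (fun n => v i n * v j n) N - Rn N| ≤ δ * (C + L) := by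
    intro N
    simp only [hRndef]
    rw [← hS2, seqAvg, div_sub_div_same, ← Finset.sum_sub_distrib]
    refine avg_abs_le _ (δ * (C + L)) (by positivity) ?_ N
    intro n
    have e1 : |v i n - a (ρ (v i n))| ≤ δ := hnear i n
    have e2 : |v j n - a (ρ (v j n))| ≤ δ := hnear j n
    have e3 : |a (ρ (v j n))| ≤ L := abs_a _ (rho_lt _ (hb j n))
    have e4 : |v i n| ≤ C := hb i n
    calc |v i n * v j n - a (ρ (v i n)) * a (ρ (v j n))|
        = |v i n * (v j n - a (ρ (v j n))) + a (ρ (v j n)) * (v i n - a (ρ (v i n)))| := by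
          congr 1; ring
      _ ≤ |v i n * (v j n - a (ρ (v j n)))| + |a (ρ (v j n)) * (v i n - a (ρ (v i n)))| :=
          abs_add_le _ _
      _ = |v i n| * |v j n - a (ρ (v j n))| + |a (ρ (v j n))| * |v i n - a (ρ (v i n))| := by
          rw [abs_mul, abs_mul]
      _ ≤ C * δ + L * δ := by
          have h0 : (0:ℝ) ≤ |a (ρ (v j n))| := abs_nonneg _
          gcongr
      _ = δ * (C + L) := by ring
  have hδ2L : δ ≤ 2 * L := by
    rw [hδdef]
    apply div_le_self (by positivity)
    exact_mod_cast hm0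
  have hfin : |PL * QL - E * E| ≤ 4 * L * δ := by
    have hPLb : |PL| ≤ C + δ := by
      calc |PL| = |E + (PL - E)| := by congr 1; ring
        _ ≤ |E| + |PL - E| := abs_add_le _ _
        _ ≤ C + δ := add_le_add hEC hPE
    calc |PL * QL - E * E| = |PL * (QL - E) + E * (PL - E)| := by congr 1; ring
      _ ≤ |PL * (QL - E)| + |E * (PL - E)| := abs_add_le _ _
      _ = |PL| * |QL - E| + |E| * |PL - E| := by rw [abs_mul, abs_mul]
      _ ≤ (C + δ) * δ + C * δ := by
          have h1 : (0:ℝ) ≤ |PL| := abs_nonneg _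
          have h2 : (0:ℝ) ≤ |E| := abs_nonneg _
          gcongr
      _ = (2 * C + δ) * δ := by ring
      _ ≤ (4 * L) * δ := mul_le_mul_of_nonneg_right (by linarith) hδ.le
      _ = 4 * L * δ := by ring
  obtain ⟨N₀, hN₀⟩ := (Metric.tendsto_atTop.mp hRn) (ε / 2) (by linarith)
  refine ⟨N₀, fun N hN => ?_⟩
  have h3 := hN₀ N hN
  rw [Real.dist_eq] at h3 ⊢
  have h4 := b2 N
  have h5 : δ * (C + L) ≤ 2 * L * δ := by
    calc δ * (C + L) = (C + L) * δ := by ring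
      _ ≤ 2 * L * δ := mul_le_mul_of_nonneg_right (by linarith) hδ.le
  calc |seqAvg (fun n => v i n * v j n) N - E * E|
      ≤ |seqAvg (fun n => v i n * v j n) N - Rn N| + |Rn N - E * E| := abs_sub_le _ _ _
    _ ≤ |seqAvg (fun n => v i n * v j n) N - Rn N| + (|Rn N - PL * QL| + |PL * QL - E * E|) :=
        by gcongr; exact abs_sub_le _ _ _
    _ < 2 * L * δ + (ε / 2 + 4 * L * δ) :=
        add_lt_add_of_le_of_lt (le_trans h4 h5) (add_lt_add_of_lt_of_le h3 hfin)
    _ < ε := by linarith [hhalf]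

theorem weak_law_for_indep_sequences (k : ℕ) (hk : 0 < k) (v : Fin k → ℕ → ℝ)
    (C : ℝ) (hb : ∀ j n, |v j n| ≤ C) (F : Fin k → ℝ → ℝ)
    (hadf : ∀ j, HasADF (v j) (F j)) (hFc : ∀ j, Continuous (F j))
    (hind : IndepFamily v) (E D2 : ℝ)
    (hE : ∀ j, HasMeanValue (v j) E)
    (hD : ∀ j, HasMeanValue (fun n => (v j n - E) ^ 2) D2)
    (ε : ℝ) (hε : 0 < ε) :
    upperDensity {n | ε ≤ |(∑ j, v j n) / k - E|} ≤ D2 / (k * ε ^ 2) := by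
  classical
  have hk' : (0:ℝ) < k := by exact_mod_cast hk
  have hcross : ∀ p q : Fin k, HasMeanValue (fun n => (v p n - E) * (v q n - E))
      (if p = q then D2 else 0) := by
    intro p q
    by_cases hpq : p = q
    · subst hpq
      simp only [if_pos rfl]
      exact (hD p).congr (fun n => by ring)
    · simp only [if_neg hpq]
      have hmul := indep_mean_mul k v C hb hind E hE p q hpq
      have h := hmul.add (((hE p).const_mul (-E)).add
        (((hE q).const_mul (-E)).add (hasMeanValue_const (E*E))))
      have h0 : E * E + (-E * E + (-E * E + E * E)) = 0 := by ring
      rw [h0] at h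
      exact h.congr (fun n => by ring)
  set w : ℕ → ℝ := fun n => ((∑ j, v j n) / k - E) ^ 2 with hwdef
  have hsq : HasMeanValue w (D2 / k) := by
    have hsum : HasMeanValue
        (fun n => ∑ p : Fin k, ∑ q : Fin k, (v p n - E) * (v q n - E))
        (∑ p : Fin k, ∑ q : Fin k, if p = q then D2 else 0) := by
      refine hasMeanValue_sum Finset.univ _ _ (fun p _ => ?_)
      exact hasMeanValue_sum Finset.univ _ _ (fun q _ => hcross p q)
    have hval : (∑ p : Fin k, ∑ q : Fin k, if p = q then D2 else 0) = k * D2 := by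
      simp [Finset.sum_ite_eq, Finset.card_univ, mul_comm]
    rw [hval] at hsum
    have h := hsum.const_mul (1 / (k:ℝ)^2)
    have hv2 : 1 / (k:ℝ)^2 * ((k:ℝ) * D2) = D2 / k := by
      field_simp
    rw [hv2] at h
    refine h.congr (fun n => ?_)
    have hsumE : (∑ _j : Fin k, E) = (k:ℝ) * E := by
      simp [Finset.card_univ, mul_comm]
    have h1 : (∑ j, v j n) / k - E = (∑ j, (v j n - E)) / k := by
      rw [Finset.sum_sub_distrib, hsumE, sub_div]
      congr 1
      field_simp
    show 1 / (k:ℝ)^2 * (∑ p : Fin k, ∑ q : Fin k, (v p n - E) * (v q n - E))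
        = ((∑ j, v j n) / k - E) ^ 2
    rw [h1, div_pow, sq (∑ j, (v j n - E)), Finset.sum_mul_sum, one_div_mul_eq_div]
  set A : Set ℕ := {n | ε ≤ |(∑ j, v j n) / k - E|} with hAdef
  have hub : ∀ N : ℕ, countBelow A N / N ≤ seqAvg w N / ε ^ 2 := by
    intro N
    have hpt : ∀ n, Set.indicator A (fun _ => (1:ℝ)) n ≤ w n / ε ^ 2 := by
      intro n
      by_cases hn : n ∈ A
      · rw [Set.indicator_of_mem hn]
        have h1 : ε ≤ |(∑ j, v j n) / k - E| := hn
        have h2 : ε ^ 2 ≤ ((∑ j, v j n) / k - E) ^ 2 := by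
          rw [← sq_abs ((∑ j, v j n) / k - E)]
          exact pow_le_pow_left₀ hε.le h1 2
        rw [le_div_iff₀ (by positivity)]
        simpa [hwdef] using h2
      · rw [Set.indicator_of_notMem hn]
        have : (0:ℝ) ≤ w n := by rw [hwdef]; positivity
        positivity
    have hsum' : countBelow A N ≤ (∑ n ∈ Finset.range N, w n) / ε ^ 2 := by
      rw [Finset.sum_div]
      exact Finset.sum_le_sum fun n _ => hpt n
    rcases Nat.eq_zero_or_pos N with hN | hN
    · simp [hN, countBelow, seqAvg]
    · have hN' : (0:ℝ) < N := by exact_mod_cast hN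
      calc countBelow A N / N ≤ ((∑ n ∈ Finset.range N, w n) / ε ^ 2) / N :=
            (div_le_div_iff_of_pos_right hN').mpr hsum'
        _ = seqAvg w N / ε ^ 2 := by rw [div_right_comm]; rfl
  have h0 : ∀ N : ℕ, 0 ≤ countBelow A N / N := by
    intro N
    have : 0 ≤ countBelow A N :=
      Finset.sum_nonneg fun n _ => Set.indicator_nonneg (fun _ _ => zero_le_one) n
    positivity
  have hlim : Tendsto (fun N => seqAvg w N / ε ^ 2) atTop (nhds ((D2 / k) / ε ^ 2)) :=
    hsq.div_const _
  have hle : upperDensity A ≤ (D2 / k) / ε ^ 2 := by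
    have h := limsup_le_limsup (Eventually.of_forall hub)
      (isCoboundedUnder_le_of_le atTop h0) hlim.isBoundedUnder_le
    rw [hlim.limsup_eq] at h
    exact h
  rwa [div_div] at hle
end

section
/- Let v be a polyadicly continuous real sequence with continuous extension ṽ : Ω → ℝ, and let F be a continuous function on ℝ. Then F is the distribution function of the random variable ṽ on (Ω, P) (P the Haar probability measure) if and only if v is Buck measurable with Buck distribution function F, if and only if μ*({n ∈ ℕ : v(n) < x}) = F(x) for every real x. -/
open Filter MeasureTheory Topology
open scoped ENNReal

/-- A sequence is polyadicly continuous if for every `ε > 0` there is a modulus `m` such that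
congruence mod `m` forces values `ε`-close. -/
def PolyadiclyContinuous (v : ℕ → ℝ) : Prop :=
  ∀ ε > (0 : ℝ), ∃ m : ℕ, 0 < m ∧ ∀ a b : ℕ, a ≡ b [MOD m] → |v a - v b| < ε

instance (p : Nat.Primes) : Fact (Nat.Prime (p : ℕ)) := ⟨p.2⟩

/-- The compact ring `Ω` of polyadic integers, realized as the product of all rings
of `p`-adic integers. -/
abbrev PolyadicInt : Type := (p : Nat.Primes) → ℤ_[(p : ℕ)]

/-- The natural (dense) embedding of `ℕ` into the polyadic integers. -/
noncomputable def polyadicEmb (n : ℕ) : PolyadicInt := fun p => (n : ℤ_[(p : ℕ)])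

noncomputable instance : MeasurableSpace PolyadicInt := borel PolyadicInt
instance : BorelSpace PolyadicInt := ⟨rfl⟩

/-- The Haar probability measure `P` on the compact ring of polyadic integers. -/
noncomputable def haarP : Measure PolyadicInt :=
  Measure.addHaarMeasure (⊤ : TopologicalSpace.PositiveCompacts PolyadicInt)


/-! ### Auxiliary development -/

theorem padic_isUnit_ordCompl {p : ℕ} [hp : Fact p.Prime] {m : ℕ} (hm : m ≠ 0) :
    IsUnit ((ordCompl[p] m : ℕ) : ℤ_[p]) := by
  rw [PadicInt.isUnit_iff]
  refine le_antisymm (PadicInt.norm_le_one _) (not_lt.mp ?_)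
  intro h
  rw [show ((ordCompl[p] m : ℕ) : ℤ_[p]) = (((ordCompl[p] m : ℕ) : ℤ) : ℤ_[p]) by norm_cast] at h
  have h2 := (PadicInt.norm_int_lt_one_iff_dvd (p := p) ((ordCompl[p] m : ℕ) : ℤ)).mp h
  exact Nat.not_dvd_ordCompl hp.1 hm (by exact_mod_cast h2)

theorem padic_dvd_cast_iff {p : ℕ} [hp : Fact p.Prime] {m : ℕ} (hm : m ≠ 0) (x : ℤ_[p]) :
    (m : ℤ_[p]) ∣ x ↔ (p : ℤ_[p]) ^ (m.factorization p) ∣ x := by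
  conv_lhs => rw [← Nat.ordProj_mul_ordCompl_eq_self m p]
  rw [Nat.cast_mul, Nat.cast_pow, (padic_isUnit_ordCompl hm).mul_right_dvd]

theorem padic_dvd_pow_norm_le {p : ℕ} [hp : Fact p.Prime] {n : ℕ} {x : ℤ_[p]}
    (h : (p : ℤ_[p]) ^ n ∣ x) : ‖x‖ ≤ (p:ℝ) ^ (-n : ℤ) := by
  rw [PadicInt.norm_le_pow_iff_mem_span_pow, Ideal.mem_span_singleton]; exact h

/-- The "coset" `r + mΩ` inside the polyadic integers. -/
def cosetNat (r m : ℕ) : Set PolyadicInt :=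
  {α | ∀ p : Nat.Primes, ((m : ℤ_[(p:ℕ)]) ∣ α p - (r : ℤ_[(p:ℕ)]))}

theorem isClopen_padic_dvd_sub {p : ℕ} [hp : Fact p.Prime] {m : ℕ} (hm : m ≠ 0) (c : ℤ_[p]) :
    IsClopen {x : ℤ_[p] | (m : ℤ_[p]) ∣ x - c} := by
  have he : {x : ℤ_[p] | (m : ℤ_[p]) ∣ x - c}
      = (fun x => x - c) ⁻¹' {y : ℤ_[p] | ‖y‖ ≤ (p:ℝ) ^ (-(m.factorization p) : ℤ)} := by
    ext x
    simp only [Set.mem_setOf_eq, Set.mem_preimage, padic_dvd_cast_iff hm,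
      PadicInt.norm_le_pow_iff_mem_span_pow, Ideal.mem_span_singleton]
  rw [he]
  have hc : Continuous (fun x : ℤ_[p] => x - c) := continuous_id.sub continuous_const
  constructor
  · exact (isClosed_le continuous_norm continuous_const).preimage hc
  · have ho : {y : ℤ_[p] | ‖y‖ ≤ (p:ℝ) ^ (-(m.factorization p) : ℤ)}
        = {y : ℤ_[p] | ‖y‖ < (p:ℝ) ^ (-(m.factorization p) + 1 : ℤ)} := by
      ext y; exact PadicInt.norm_le_pow_iff_norm_lt_pow_add_one y _
    rw [ho]
    exact (isOpen_lt continuous_norm continuous_const).preimage hc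

theorem cosetNat_eq_biInter (r m : ℕ) (hm : m ≠ 0) :
    cosetNat r m = ⋂ p ∈ {p : Nat.Primes | (p : ℕ) ∣ m},
      (fun α : PolyadicInt => α p) ⁻¹' {x | (m : ℤ_[(p:ℕ)]) ∣ x - (r : ℤ_[(p:ℕ)])} := by
  ext α
  simp only [cosetNat, Set.mem_setOf_eq, Set.mem_iInter, Set.mem_preimage]
  constructor
  · intro h p _; exact h p
  · intro h p
    by_cases hd : (p : ℕ) ∣ m
    · exact h p hd
    · rw [padic_dvd_cast_iff hm, Nat.factorization_eq_zero_of_not_dvd hd, pow_zero]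
      exact one_dvd _
theorem finite_prime_dvd (m : ℕ) (hm : m ≠ 0) : {p : Nat.Primes | (p : ℕ) ∣ m}.Finite := by
  have : {p : Nat.Primes | (p : ℕ) ∣ m} ⊆ (fun p : Nat.Primes => (p : ℕ)) ⁻¹' (Set.Iic m) := by
    intro p hp
    exact Nat.le_of_dvd (Nat.pos_of_ne_zero hm) hp
  exact Set.Finite.subset ((Set.finite_Iic m).preimage Nat.Primes.coe_nat_injective.injOn) this

theorem isClopen_cosetNat (r : ℕ) {m : ℕ} (hm : m ≠ 0) : IsClopen (cosetNat r m) := by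
  rw [cosetNat_eq_biInter r m hm]
  constructor
  · exact isClosed_biInter fun p _ =>
      ((isClopen_padic_dvd_sub hm _).isClosed).preimage (continuous_apply p)
  · exact (finite_prime_dvd m hm).isOpen_biInter fun p _ =>
      ((isClopen_padic_dvd_sub hm _).isOpen).preimage (continuous_apply p)

theorem exists_cosetNat_mem (α : PolyadicInt) {m : ℕ} (hm : m ≠ 0) :
    ∃ r, r < m ∧ α ∈ cosetNat r m := by
  classical
  set apprAt : Nat.Primes → ℕ := fun p => (α p).appr (m.factorization (p : ℕ)) with hA
  set a : ℕ → ℕ := fun q => if hq : q.Prime then apprAt ⟨q, hq⟩ else 0 with ha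
  set s : ℕ → ℕ := fun q => q ^ m.factorization q with hs
  have hs0 : ∀ q ∈ m.primeFactors, s q ≠ 0 := fun q hq =>
    pow_ne_zero _ (Nat.Prime.ne_zero (Nat.prime_of_mem_primeFactors hq))
  have pp : Set.Pairwise (m.primeFactors : Set ℕ) (Function.onFun Nat.Coprime s) := by
    intro q hq q' hq' hne
    exact Nat.Coprime.pow _ _ ((Nat.coprime_primes (Nat.prime_of_mem_primeFactors hq)
      (Nat.prime_of_mem_primeFactors hq')).mpr hne)
  obtain ⟨k, hk⟩ := Nat.chineseRemainderOfFinset a s m.primeFactors hs0 pp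
  refine ⟨k % m, Nat.mod_lt _ (Nat.pos_of_ne_zero hm), ?_⟩
  intro p
  rw [padic_dvd_cast_iff hm]
  by_cases hd : (p : ℕ) ∣ m
  · have hmem : (p : ℕ) ∈ m.primeFactors := Nat.mem_primeFactors.mpr ⟨p.2, hd, hm⟩
    have hkp := hk (p : ℕ) hmem
    set e := m.factorization (p : ℕ) with he
    have haq : a (p : ℕ) = (α p).appr e := by
      rw [ha]; simp only [dif_pos p.2, Subtype.coe_eta, hA]; rfl
    rw [haq] at hkp
    have d1 : (p : ℤ_[(p:ℕ)]) ^ e ∣ (α p - ((α p).appr e : ℤ_[(p:ℕ)])) := by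
      have := PadicInt.appr_spec e (α p)
      rwa [Ideal.mem_span_singleton] at this
    have d2 : (p : ℤ_[(p:ℕ)]) ^ e ∣ (((α p).appr e : ℤ_[(p:ℕ)]) - (k : ℤ_[(p:ℕ)])) := by
      obtain ⟨c, hc⟩ : (((p:ℕ) ^ e : ℕ) : ℤ) ∣ (((α p).appr e : ℤ) - (k : ℤ)) :=
        Nat.ModEq.dvd hkp
      refine ⟨(c : ℤ_[(p:ℕ)]), ?_⟩
      have := congrArg (fun z : ℤ => (z : ℤ_[(p:ℕ)])) hc
      push_cast at this ⊢
      exact this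
    have h2 : (p : ℤ_[(p:ℕ)]) ^ e ∣ (m : ℤ_[(p:ℕ)]) := by
      have h3 : (((p:ℕ) ^ e : ℕ) : ℤ_[(p:ℕ)]) ∣ (m : ℤ_[(p:ℕ)]) :=
        Nat.cast_dvd_cast (Nat.ordProj_dvd m (p : ℕ))
      push_cast at h3
      exact h3
    have h1 : ((k % m : ℕ) : ℤ_[(p:ℕ)]) + (m : ℤ_[(p:ℕ)]) * ((k / m : ℕ) : ℤ_[(p:ℕ)])
        = (k : ℤ_[(p:ℕ)]) := by exact_mod_cast Nat.mod_add_div k m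
    have d3 : (p : ℤ_[(p:ℕ)]) ^ e ∣ ((k : ℤ_[(p:ℕ)]) - ((k % m : ℕ) : ℤ_[(p:ℕ)])) := by
      have h4 : (k : ℤ_[(p:ℕ)]) - ((k % m : ℕ) : ℤ_[(p:ℕ)])
          = (m : ℤ_[(p:ℕ)]) * ((k / m : ℕ) : ℤ_[(p:ℕ)]) := by rw [← h1]; ring
      rw [h4]
      exact Dvd.dvd.mul_right h2 _
    have hsum : α p - ((k % m : ℕ) : ℤ_[(p:ℕ)]) =
        (α p - ((α p).appr e : ℤ_[(p:ℕ)]))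
        + (((α p).appr e : ℤ_[(p:ℕ)]) - (k : ℤ_[(p:ℕ)]))
        + ((k : ℤ_[(p:ℕ)]) - ((k % m : ℕ) : ℤ_[(p:ℕ)])) := by ring
    rw [hsum]
    exact dvd_add (dvd_add d1 d2) d3
  · rw [Nat.factorization_eq_zero_of_not_dvd hd, pow_zero]
    exact one_dvd _

theorem cosetNat_eq_of_inter {r r' m : ℕ} (hm : m ≠ 0) (hr : r < m) (hr' : r' < m)
    (h : (cosetNat r m ∩ cosetNat r' m).Nonempty) : r = r' := by
  obtain ⟨α, h1, h2⟩ := h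
  by_contra hne
  have hz0 : ((r : ℤ) - (r' : ℤ)) ≠ 0 := sub_ne_zero.mpr (by exact_mod_cast hne)
  have hd0 : ((r : ℤ) - (r' : ℤ)).natAbs ≠ 0 := Int.natAbs_ne_zero.mpr hz0
  have hdm : m ∣ ((r : ℤ) - (r' : ℤ)).natAbs := by
    rw [← Nat.factorization_le_iff_dvd hm hd0, Finsupp.le_def]
    intro q
    by_cases hq : q.Prime
    · haveI : Fact q.Prime := ⟨hq⟩
      have e1 := h1 ⟨q, hq⟩
      have e2 := h2 ⟨q, hq⟩
      have h3 : ((m : ℤ_[q]) ∣ (((r : ℤ) - (r' : ℤ) : ℤ) : ℤ_[q])) := by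
        have := dvd_sub e2 e1
        push_cast
        simpa using this
      rw [padic_dvd_cast_iff hm, PadicInt.pow_p_dvd_int_iff] at h3
      have h4 := Int.natAbs_dvd_natAbs.mpr h3
      simp only [Int.natAbs_pow, Int.natAbs_natCast] at h4
      exact (Nat.Prime.pow_dvd_iff_le_factorization hq hd0).mp h4
    · simp [Nat.factorization_eq_zero_of_not_prime m hq]
  have hge : m ≤ ((r : ℤ) - (r' : ℤ)).natAbs := Nat.le_of_dvd (Nat.pos_of_ne_zero hd0) hdm
  omega

instance : Measure.IsAddLeftInvariant haarP := by
  unfold haarP; infer_instance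

instance : IsProbabilityMeasure haarP := by
  constructor
  rw [haarP, ← TopologicalSpace.PositiveCompacts.coe_top (α := PolyadicInt)]
  exact Measure.addHaarMeasure_self

theorem padic_cast_dvd_of_int_dvd {p : ℕ} [Fact p.Prime] {m : ℕ} {z : ℤ}
    (h : (m : ℤ) ∣ z) : (m : ℤ_[p]) ∣ (z : ℤ_[p]) := by
  have := map_dvd (Int.castRingHom ℤ_[p]) h
  simpa using this

theorem mem_cosetNat_of_dvd {n r m : ℕ} (h : (m : ℤ) ∣ (n : ℤ) - (r : ℤ)) :
    polyadicEmb n ∈ cosetNat r m := by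
  intro p
  have := padic_cast_dvd_of_int_dvd (p := (p : ℕ)) h
  push_cast at this
  exact this

theorem mem_cosetNat_mod (n : ℕ) {m : ℕ} (hm : m ≠ 0) : polyadicEmb n ∈ cosetNat (n % m) m := by
  refine mem_cosetNat_of_dvd ⟨(n / m : ℕ), ?_⟩
  have h : (n : ℤ) = ((n % m : ℕ) : ℤ) + (m : ℤ) * ((n / m : ℕ) : ℤ) := by
    exact_mod_cast (Nat.mod_add_div n m).symm
  rw [h]; ring

theorem univ_eq_biUnion_cosetNat {m : ℕ} (hm : m ≠ 0) :
    (Set.univ : Set PolyadicInt) = ⋃ r ∈ Finset.range m, cosetNat r m := by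
  ext α
  simp only [Set.mem_univ, true_iff, Set.mem_iUnion, Finset.mem_range]
  obtain ⟨r, hr, hmem⟩ := exists_cosetNat_mem α hm
  exact ⟨r, hr, hmem⟩

theorem haarP_cosetNat_eq (r : ℕ) {m : ℕ} (hm : m ≠ 0) :
    haarP (cosetNat r m) = haarP (cosetNat 0 m) := by
  have hpre : (fun β => polyadicEmb r + β) ⁻¹' (cosetNat r m) = cosetNat 0 m := by
    ext β
    simp only [Set.mem_preimage, cosetNat, Set.mem_setOf_eq]
    have e : ∀ p : Nat.Primes, ((polyadicEmb r + β) p - (r : ℤ_[(p:ℕ)]))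
        = β p - ((0 : ℕ) : ℤ_[(p:ℕ)]) := by
      intro p
      simp only [Pi.add_apply, polyadicEmb]
      push_cast
      ring
    constructor
    · intro h p; have := h p; rwa [e p] at this
    · intro h p; rw [e p]; exact h p
  rw [← hpre, measure_preimage_add]

theorem haarP_cosetNat (r : ℕ) {m : ℕ} (hm : m ≠ 0) :
    haarP (cosetNat r m) = (m : ℝ≥0∞)⁻¹ := by
  have hsum : ∑ s ∈ Finset.range m, haarP (cosetNat s m) = 1 := by
    rw [← measure_biUnion_finset]
    · rw [← univ_eq_biUnion_cosetNat hm]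
      exact measure_univ
    · intro i hi j hj hij
      simp only [Finset.mem_coe, Finset.mem_range] at hi hj
      rw [Function.onFun, Set.disjoint_iff_inter_eq_empty]
      by_contra hne
      exact hij (cosetNat_eq_of_inter hm hi hj (Set.nonempty_iff_ne_empty.mpr hne))
    · exact fun b _ => ((isClopen_cosetNat b hm).isClosed).measurableSet
  have hconst : ∀ s ∈ Finset.range m, haarP (cosetNat s m) = haarP (cosetNat 0 m) :=
    fun s _ => haarP_cosetNat_eq s hm
  rw [Finset.sum_congr rfl hconst, Finset.sum_const, Finset.card_range, nsmul_eq_mul] at hsum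
  have hm' : (m : ℝ≥0∞) ≠ 0 := Nat.cast_ne_zero.mpr hm
  have := congrArg (fun x => (m : ℝ≥0∞)⁻¹ * x) hsum
  simp only [← mul_assoc, ENNReal.inv_mul_cancel hm' (ENNReal.natCast_ne_top m), one_mul,
    mul_one] at this
  rw [haarP_cosetNat_eq r hm, this]

/-- The "congruence neighborhood" of `α` modulo `m`. -/
def cosetOf (α : PolyadicInt) (m : ℕ) : Set PolyadicInt :=
  {β | ∀ p : Nat.Primes, ((m : ℤ_[(p:ℕ)]) ∣ β p - α p)}

theorem exists_modulus_subset {U : Set PolyadicInt} (hU : IsOpen U) {α : PolyadicInt}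
    (hα : α ∈ U) : ∃ m : ℕ, m ≠ 0 ∧ cosetOf α m ⊆ U := by
  classical
  obtain ⟨I, u, hu, hsub⟩ := isOpen_pi_iff.mp hU α hα
  have hn : ∀ p : Nat.Primes, ∃ n : ℕ,
      p ∈ I → {x : ℤ_[(p:ℕ)] | ‖x - α p‖ ≤ ((p:ℕ):ℝ) ^ (-(n:ℤ))} ⊆ u p := by
    intro p
    by_cases hp : p ∈ I
    · obtain ⟨ho, hmem⟩ := hu p hp
      obtain ⟨ε, hε, hball⟩ := Metric.isOpen_iff.mp ho (α p) hmem
      have h1 : (1 : ℝ) / (p : ℕ) < 1 := by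
        rw [div_lt_one (by exact_mod_cast p.2.pos)]
        exact_mod_cast p.2.one_lt
      obtain ⟨n, hn⟩ := exists_pow_lt_of_lt_one hε h1
      refine ⟨n, fun _ => ?_⟩
      intro x hx
      apply hball
      rw [Metric.mem_ball, dist_eq_norm]
      calc ‖x - α p‖ ≤ ((p:ℕ):ℝ) ^ (-(n:ℤ)) := hx
        _ = (1 / (p:ℕ) : ℝ) ^ n := by
            rw [zpow_neg, zpow_natCast, one_div, inv_pow]
        _ < ε := hn
    · exact ⟨0, fun h => absurd h hp⟩
  choose n hn using hn
  refine ⟨∏ p ∈ I, (p : ℕ) ^ (n p), Finset.prod_ne_zero_iff.mpr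
    (fun p _ => pow_ne_zero _ p.2.ne_zero), ?_⟩
  intro β hβ
  apply hsub
  intro p hp
  apply hn p hp
  have hdvd : ((p : ℕ) ^ (n p) : ℕ) ∣ ∏ q ∈ I, (q : ℕ) ^ (n q) :=
    Finset.dvd_prod_of_mem (fun q : Nat.Primes => (q : ℕ) ^ (n q)) hp
  have h2 : (((p : ℕ) ^ (n p) : ℕ) : ℤ_[(p:ℕ)]) ∣ β p - α p :=
    dvd_trans (Nat.cast_dvd_cast hdvd) (hβ p)
  rw [Nat.cast_pow] at h2
  exact padic_dvd_pow_norm_le h2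

theorem dense_range_polyadicEmb : DenseRange polyadicEmb := by
  rw [denseRange_iff_closure_range]
  rw [Set.eq_univ_iff_forall]
  intro α
  rw [mem_closure_iff]
  intro U hU hα
  obtain ⟨m, hm, hsub⟩ := exists_modulus_subset hU hα
  obtain ⟨r, hr, hmem⟩ := exists_cosetNat_mem α hm
  refine ⟨polyadicEmb r, hsub ?_, Set.mem_range_self r⟩
  intro p
  have := hmem p
  have h2 : (polyadicEmb r) p - α p = -(α p - (r : ℤ_[(p:ℕ)])) := by
    simp only [polyadicEmb]; ring
  rw [h2]
  exact dvd_neg.mpr this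

/-! ### from AP to cosets -/

theorem emb_mem_cosetNat_of_AP {n r m : ℕ} (h : n ∈ AP r m) : polyadicEmb n ∈ cosetNat r m := by
  obtain ⟨j, rfl⟩ := h
  exact mem_cosetNat_of_dvd ⟨j, by push_cast; ring⟩

theorem mem_AP_mod (n : ℕ) {m : ℕ} (hm : m ≠ 0) : n ∈ AP (n % m) m :=
  ⟨n / m, (Nat.mod_add_div' n m).symm⟩

/-! ### the approximating sets -/

noncomputable def MN (N : ℕ) : ℕ := (N + 1).factorial

theorem MN_ne_zero (N : ℕ) : MN N ≠ 0 := Nat.factorial_ne_zero _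

theorem MN_dvd_succ (N : ℕ) : MN N ∣ MN (N + 1) :=
  Nat.factorial_dvd_factorial (by omega)

noncomputable def goodRes (C : Set PolyadicInt) (N : ℕ) : Finset ℕ :=
  @Finset.filter _ (fun r => (cosetNat r (MN N) ∩ C).Nonempty)
    (fun _ => Classical.propDecidable _) (Finset.range (MN N))

theorem mem_goodRes {C : Set PolyadicInt} {N r : ℕ} :
    r ∈ goodRes C N ↔ r < MN N ∧ (cosetNat r (MN N) ∩ C).Nonempty := by
  classical
  simp [goodRes, Finset.mem_filter, Finset.mem_range]

noncomputable def UN (C : Set PolyadicInt) (N : ℕ) : Set PolyadicInt :=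
  ⋃ r ∈ goodRes C N, cosetNat r (MN N)

theorem cosetNat_subset_mod {r m m' : ℕ} (hm : m ≠ 0) (hdvd : m ∣ m') :
    cosetNat r m' ⊆ cosetNat (r % m) m := by
  intro β hβ
  intro p
  have h1 : (m : ℤ_[(p:ℕ)]) ∣ β p - (r : ℤ_[(p:ℕ)]) :=
    dvd_trans (Nat.cast_dvd_cast hdvd) (hβ p)
  have h2 : (m : ℤ_[(p:ℕ)]) ∣ ((r : ℤ_[(p:ℕ)]) - ((r % m : ℕ) : ℤ_[(p:ℕ)])) := by
    refine ⟨((r / m : ℕ) : ℤ_[(p:ℕ)]), ?_⟩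
    have h : (r : ℤ_[(p:ℕ)]) = ((r % m : ℕ) : ℤ_[(p:ℕ)])
        + (m : ℤ_[(p:ℕ)]) * ((r / m : ℕ) : ℤ_[(p:ℕ)]) := by
      exact_mod_cast congrArg (fun t : ℕ => (t : ℤ_[(p:ℕ)])) (Nat.mod_add_div r m).symm
    rw [h]; ring
  have h3 : β p - ((r % m : ℕ) : ℤ_[(p:ℕ)])
      = (β p - (r : ℤ_[(p:ℕ)])) + ((r : ℤ_[(p:ℕ)]) - ((r % m : ℕ) : ℤ_[(p:ℕ)])) := by ring
  rw [h3]
  exact dvd_add h1 h2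

theorem UN_antitone (C : Set PolyadicInt) : Antitone (UN C) := by
  apply antitone_nat_of_succ_le
  intro N α hα
  simp only [UN, Set.mem_iUnion] at hα ⊢
  obtain ⟨r, hr, hmem⟩ := hα
  rw [mem_goodRes] at hr
  refine ⟨r % MN N, ?_, cosetNat_subset_mod (MN_ne_zero N) (MN_dvd_succ N) hmem⟩
  rw [mem_goodRes]
  refine ⟨Nat.mod_lt _ (Nat.pos_of_ne_zero (MN_ne_zero N)), ?_⟩
  obtain ⟨γ, hγ1, hγ2⟩ := hr.2
  exact ⟨γ, cosetNat_subset_mod (MN_ne_zero N) (MN_dvd_succ N) hγ1, hγ2⟩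

theorem subset_UN (C : Set PolyadicInt) (N : ℕ) : C ⊆ UN C N := by
  intro γ hγ
  obtain ⟨r, hr, hmem⟩ := exists_cosetNat_mem γ (MN_ne_zero N)
  simp only [UN, Set.mem_iUnion]
  exact ⟨r, mem_goodRes.mpr ⟨hr, ⟨γ, hmem, hγ⟩⟩, hmem⟩

theorem iInter_UN_subset_closure (C : Set PolyadicInt) : (⋂ N, UN C N) ⊆ closure C := by
  intro α hα
  rw [mem_closure_iff]
  intro U hU hαU
  obtain ⟨m, hm, hsub⟩ := exists_modulus_subset hU hαU
  -- pick N with m ∣ MN N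
  have hdvd : m ∣ MN m := Nat.dvd_factorial (Nat.pos_of_ne_zero hm) (by omega)
  have hαN := Set.mem_iInter.mp hα m
  simp only [UN, Set.mem_iUnion] at hαN
  obtain ⟨r, hr, hmem⟩ := hαN
  obtain ⟨γ, hγ1, hγ2⟩ := (mem_goodRes.mp hr).2
  refine ⟨γ, hsub ?_, hγ2⟩
  intro p
  have h1 := hmem p
  have h2 := hγ1 p
  have h3 : (MN m : ℤ_[(p:ℕ)]) ∣ γ p - α p := by
    have : γ p - α p = (γ p - (r : ℤ_[(p:ℕ)])) - (α p - (r : ℤ_[(p:ℕ)])) := by ring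
    rw [this]
    exact dvd_sub h2 h1
  exact dvd_trans (Nat.cast_dvd_cast hdvd) h3

theorem closure_eq_iInter_UN (C : Set PolyadicInt) (hC : IsClosed C) : (⋂ N, UN C N) = C := by
  apply le_antisymm
  · intro α hα
    have := iInter_UN_subset_closure C hα
    rwa [hC.closure_eq] at this
  · intro γ hγ
    exact Set.mem_iInter.mpr fun N => subset_UN C N hγ

theorem measurableSet_UN (C : Set PolyadicInt) (N : ℕ) : MeasurableSet (UN C N) := by
  apply Finset.measurableSet_biUnion
  intro r _
  exact ((isClopen_cosetNat r (MN_ne_zero N)).isClosed).measurableSet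

theorem haarP_UN (C : Set PolyadicInt) (N : ℕ) :
    haarP (UN C N) = ((goodRes C N).card : ℝ≥0∞) * ((MN N : ℝ≥0∞))⁻¹ := by
  rw [UN, measure_biUnion_finset]
  · rw [Finset.sum_congr rfl fun r _ => haarP_cosetNat r (MN_ne_zero N), Finset.sum_const,
      nsmul_eq_mul]
  · intro i hi j hj hij
    rw [Function.onFun, Set.disjoint_iff_inter_eq_empty]
    by_contra hne
    exact hij (cosetNat_eq_of_inter (MN_ne_zero N) (mem_goodRes.mp hi).1 (mem_goodRes.mp hj).1
      (Set.nonempty_iff_ne_empty.mpr hne))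
  · exact fun r _ => ((isClopen_cosetNat r (MN_ne_zero N)).isClosed).measurableSet

/-- The coverable-sums set in the definition of `buckOuter`. -/
def buckSet (S : Set ℕ) : Set ℝ :=
  {x | ∃ (k : ℕ) (r : Fin k → ℕ) (m : Fin k → ℕ), (∀ j, 0 < m j) ∧
    S ⊆ (⋃ j, AP (r j) (m j)) ∧ x = ∑ j, (1 : ℝ) / (m j)}

theorem buckOuter_eq_sInf (S : Set ℕ) : buckOuter S = sInf (buckSet S) := rfl

theorem one_mem_buckSet (S : Set ℕ) : (1 : ℝ) ∈ buckSet S := by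
  refine ⟨1, fun _ => 0, fun _ => 1, fun j => one_pos, ?_, by simp⟩
  intro n _
  exact Set.mem_iUnion.mpr ⟨0, ⟨n, by simp⟩⟩

theorem haarP_closure_le (S : Set ℕ) {x : ℝ} (hx : x ∈ buckSet S) :
    (haarP (closure (polyadicEmb '' S))).toReal ≤ x := by
  obtain ⟨k, r, m, hm, hcov, rfl⟩ := hx
  have hsub : closure (polyadicEmb '' S) ⊆ ⋃ j, cosetNat (r j) (m j) := by
    apply closure_minimal
    · rintro _ ⟨n, hn, rfl⟩
      obtain ⟨j, hj⟩ := Set.mem_iUnion.mp (hcov hn)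
      exact Set.mem_iUnion.mpr ⟨j, emb_mem_cosetNat_of_AP hj⟩
    · exact isClosed_iUnion_of_finite fun j =>
        ((isClopen_cosetNat (r j) (hm j).ne').isClosed)
  have h1 : haarP (closure (polyadicEmb '' S)) ≤ ∑ j, ((m j : ℝ≥0∞))⁻¹ := by
    calc haarP (closure (polyadicEmb '' S)) ≤ haarP (⋃ j, cosetNat (r j) (m j)) :=
          measure_mono hsub
      _ ≤ ∑' j, haarP (cosetNat (r j) (m j)) := measure_iUnion_le _
      _ = ∑ j, haarP (cosetNat (r j) (m j)) := tsum_fintype _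
      _ = ∑ j, ((m j : ℝ≥0∞))⁻¹ := Finset.sum_congr rfl fun j _ => haarP_cosetNat _ (hm j).ne'
  have h2 : (∑ j, ((m j : ℝ≥0∞))⁻¹) ≠ ⊤ := by
    refine (ENNReal.sum_lt_top.mpr fun j _ => ?_).ne
    exact ENNReal.inv_lt_top.mpr (by exact_mod_cast (hm j))
  calc (haarP (closure (polyadicEmb '' S))).toReal ≤ (∑ j, ((m j : ℝ≥0∞))⁻¹).toReal :=
        ENNReal.toReal_mono h2 h1
    _ = ∑ j, (1 : ℝ) / (m j) := by
        rw [ENNReal.toReal_sum (fun j _ => ENNReal.inv_ne_top.mpr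
          (by exact_mod_cast (hm j).ne'))]
        refine Finset.sum_congr rfl fun j _ => ?_
        simp [ENNReal.toReal_inv]

theorem buckOuter_eq_haarP_closure (S : Set ℕ) :
    buckOuter S = (haarP (closure (polyadicEmb '' S))).toReal := by
  set C := closure (polyadicEmb '' S) with hC
  have hCc : IsClosed C := isClosed_closure
  apply le_antisymm
  · -- buckOuter ≤ μ C: via the approximating unions
    have htend : Tendsto (haarP ∘ UN C) atTop (𝓝 (haarP (⋂ N, UN C N))) :=
      tendsto_measure_iInter_atTop
        (fun N => (measurableSet_UN C N).nullMeasurableSet)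
        (UN_antitone C) ⟨0, measure_ne_top _ _⟩
    rw [closure_eq_iInter_UN C hCc] at htend
    -- it suffices to show `buckOuter S ≤ μ C + ε` for all ε > 0
    refine le_of_forall_pos_le_add ?_
    intro ε hε
    have hlt : haarP C < haarP C + ENNReal.ofReal ε :=
      ENNReal.lt_add_right (measure_ne_top _ _) (by simpa using hε)
    have hev := (htend.eventually_lt_const hlt)
    obtain ⟨N, hN⟩ := hev.exists
    -- build a cover from the good residues at stage N
    set R := goodRes C N with hR
    set k := R.card with hk
    have hcov : S ⊆ ⋃ j : Fin k, AP ((R.equivFin.symm j : ℕ)) (MN N) := by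
      intro n hn
      have hmem : polyadicEmb n ∈ C := subset_closure (Set.mem_image_of_mem _ hn)
      have hres : n % MN N ∈ R := by
        rw [hR, mem_goodRes]
        exact ⟨Nat.mod_lt _ (Nat.pos_of_ne_zero (MN_ne_zero N)),
          ⟨polyadicEmb n, mem_cosetNat_mod n (MN_ne_zero N), hmem⟩⟩
      refine Set.mem_iUnion.mpr ⟨R.equivFin ⟨n % MN N, hres⟩, ?_⟩
      have : ((R.equivFin.symm (R.equivFin ⟨n % MN N, hres⟩)) : ℕ) = n % MN N := by
        rw [Equiv.symm_apply_apply]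
      rw [this]
      exact mem_AP_mod n (MN_ne_zero N)
    have hmemB : ((k : ℝ) * (1 / (MN N : ℝ))) ∈ buckSet S := by
      refine ⟨k, fun j => (R.equivFin.symm j : ℕ), fun _ => MN N,
        fun _ => Nat.pos_of_ne_zero (MN_ne_zero N), hcov, ?_⟩
      rw [Finset.sum_const, Finset.card_univ, Fintype.card_fin, nsmul_eq_mul]
    have hbound : (k : ℝ) * (1 / (MN N : ℝ)) ≤ (haarP C).toReal + ε := by
      have h1 : haarP (UN C N) = (k : ℝ≥0∞) * ((MN N : ℝ≥0∞))⁻¹ := haarP_UN C N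
      have h2 : ((k : ℝ≥0∞) * ((MN N : ℝ≥0∞))⁻¹) ≤ haarP C + ENNReal.ofReal ε := by
        rw [← h1]; exact hN.le
      have h3 : (haarP C + ENNReal.ofReal ε) ≠ ⊤ :=
        ENNReal.add_ne_top.mpr ⟨measure_ne_top _ _, ENNReal.ofReal_ne_top⟩
      have e1 : ((k : ℝ≥0∞) * ((MN N : ℝ≥0∞))⁻¹).toReal = (k : ℝ) * (1 / (MN N : ℝ)) := by
        rw [ENNReal.toReal_mul, ENNReal.toReal_inv]; simp
      have e2 : (haarP C + ENNReal.ofReal ε).toReal = (haarP C).toReal + ε := by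
        rw [ENNReal.toReal_add (measure_ne_top _ _) ENNReal.ofReal_ne_top,
          ENNReal.toReal_ofReal hε.le]
      have h4 := ENNReal.toReal_mono h3 h2
      rw [e1, e2] at h4
      exact h4
    calc buckOuter S ≤ (k : ℝ) * (1 / (MN N : ℝ)) :=
          csInf_le ⟨0, fun x hx => by
            obtain ⟨k', r', m', hm', _, rfl⟩ := hx
            exact Finset.sum_nonneg fun j _ => by positivity⟩ hmemB
      _ ≤ (haarP C).toReal + ε := hbound
  · exact le_csInf ⟨1, one_mem_buckSet S⟩ fun x hx => haarP_closure_le S hx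

section Main
variable {v : ℕ → ℝ} {vt : PolyadicInt → ℝ}

theorem lt_subset_closure (hvt : Continuous vt) (hext : ∀ n : ℕ, vt (polyadicEmb n) = v n) (x : ℝ) :
    {α | vt α < x} ⊆ closure (polyadicEmb '' {n | v n < x}) := by
  intro α hα
  rw [mem_closure_iff]
  intro W hW hαW
  have hW' : IsOpen (W ∩ vt ⁻¹' (Set.Iio x)) := hW.inter (hvt.isOpen_preimage _ isOpen_Iio)
  obtain ⟨n, hn⟩ := dense_range_polyadicEmb.exists_mem_open hW' ⟨α, hαW, hα⟩
  exact ⟨polyadicEmb n, hn.1, Set.mem_image_of_mem _ (by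
    have := hn.2; rwa [Set.mem_preimage, Set.mem_Iio, hext n] at this)⟩

theorem closure_subset_le (hvt : Continuous vt) (hext : ∀ n : ℕ, vt (polyadicEmb n) = v n) (x : ℝ) :
    closure (polyadicEmb '' {n | v n < x}) ⊆ {α | vt α ≤ x} := by
  apply closure_minimal
  · rintro _ ⟨n, hn, rfl⟩
    rw [Set.mem_setOf_eq, hext n]
    exact le_of_lt hn
  · exact IsClosed.preimage hvt isClosed_Iic

theorem gt_subset_closure_compl (hvt : Continuous vt) (hext : ∀ n : ℕ, vt (polyadicEmb n) = v n) (x : ℝ) :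
    {α | x < vt α} ⊆ closure (polyadicEmb '' {n | v n < x}ᶜ) := by
  intro α hα
  rw [mem_closure_iff]
  intro W hW hαW
  have hW' : IsOpen (W ∩ vt ⁻¹' (Set.Ioi x)) := hW.inter (hvt.isOpen_preimage _ isOpen_Ioi)
  obtain ⟨n, hn⟩ := dense_range_polyadicEmb.exists_mem_open hW' ⟨α, hαW, hα⟩
  refine ⟨polyadicEmb n, hn.1, Set.mem_image_of_mem _ ?_⟩
  have := hn.2
  rw [Set.mem_preimage, Set.mem_Ioi, hext n] at this
  simp only [Set.mem_compl_iff, Set.mem_setOf_eq, not_lt]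
  exact this.le

theorem closure_compl_subset_ge (hvt : Continuous vt) (hext : ∀ n : ℕ, vt (polyadicEmb n) = v n) (x : ℝ) :
    closure (polyadicEmb '' {n | v n < x}ᶜ) ⊆ {α | x ≤ vt α} := by
  apply closure_minimal
  · rintro _ ⟨n, hn, rfl⟩
    rw [Set.mem_setOf_eq, hext n]
    simpa [not_lt] using hn
  · exact IsClosed.preimage hvt isClosed_Ici

end Main


theorem distribution_function_characterization (v : ℕ → ℝ) (hv : PolyadiclyContinuous v)
    (vt : PolyadicInt → ℝ) (hvt : Continuous vt) (hext : ∀ n : ℕ, vt (polyadicEmb n) = v n)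
    (F : ℝ → ℝ) (hF : Continuous F) :
    ((∀ x : ℝ, (haarP {α | vt α < x}).toReal = F x) ↔
      (∀ x : ℝ, BuckMeasurableSet {n | v n < x} ∧ buckOuter {n | v n < x} = F x)) ∧
    ((∀ x : ℝ, BuckMeasurableSet {n | v n < x} ∧ buckOuter {n | v n < x} = F x) ↔
      (∀ x : ℝ, buckOuter {n | v n < x} = F x)) := by
  have mono : ∀ {A B : Set PolyadicInt}, A ⊆ B → (haarP A).toReal ≤ (haarP B).toReal :=
    fun hAB => ENNReal.toReal_mono (measure_ne_top _ _) (measure_mono hAB)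
  have hcompl : ∀ {A : Set PolyadicInt}, MeasurableSet A →
      (haarP Aᶜ).toReal = 1 - (haarP A).toReal := by
    intro A hA
    rw [measure_compl hA (measure_ne_top _ _), measure_univ,
      ENNReal.toReal_sub_of_le prob_le_one ENNReal.one_ne_top, ENNReal.toReal_one]
  have meas_lt : ∀ x : ℝ, MeasurableSet {α | vt α < x} :=
    fun x => (IsOpen.preimage hvt isOpen_Iio).measurableSet
  have meas_le : ∀ x : ℝ, MeasurableSet {α | vt α ≤ x} :=
    fun x => (IsClosed.preimage hvt isClosed_Iic).measurableSet
  have hle1 : ∀ x : ℝ, (haarP {α | vt α < x}).toReal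
      ≤ (haarP (closure (polyadicEmb '' {n | v n < x}))).toReal :=
    fun x => mono (lt_subset_closure hvt hext x)
  have hle2 : ∀ x : ℝ, (haarP (closure (polyadicEmb '' {n | v n < x}))).toReal
      ≤ (haarP {α | vt α ≤ x}).toReal :=
    fun x => mono (closure_subset_le hvt hext x)
  have hlh : ∀ x y : ℝ, x < y → (haarP {α | vt α ≤ x}).toReal
      ≤ (haarP {α | vt α < y}).toReal :=
    fun x y hxy => mono (fun α hα => lt_of_le_of_lt hα hxy)
  have tendsto_right : ∀ x : ℝ,
      Tendsto (fun n : ℕ => F (x + 1 / ((n : ℝ) + 1))) atTop (𝓝 (F x)) := by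
    intro x
    have h0 : Tendsto (fun n : ℕ => x + 1 / ((n : ℝ) + 1)) atTop (𝓝 x) := by
      have h1 : Tendsto (fun n : ℕ => 1 / ((n : ℝ) + 1)) atTop (𝓝 0) :=
        tendsto_one_div_add_atTop_nhds_zero_nat
      have h2 := (tendsto_const_nhds (x := x) (f := atTop (α := ℕ))).add h1
      simpa using h2
    exact ((hF.tendsto x).comp h0)
  have tendsto_left : ∀ x : ℝ,
      Tendsto (fun n : ℕ => F (x - 1 / ((n : ℝ) + 1))) atTop (𝓝 (F x)) := by
    intro x
    have h1 : Tendsto (fun n : ℕ => 1 / ((n : ℝ) + 1)) atTop (𝓝 0) :=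
        tendsto_one_div_add_atTop_nhds_zero_nat
    have h2 := (tendsto_const_nhds (x := x) (f := atTop (α := ℕ))).sub h1
    simpa [Function.comp_def] using ((hF.tendsto x).comp (by simpa using h2))
  have claimA : (∀ x : ℝ, (haarP {α | vt α < x}).toReal = F x) →
      ∀ x : ℝ, (haarP {α | vt α ≤ x}).toReal = F x := by
    intro Hh x
    apply le_antisymm
    · refine ge_of_tendsto (tendsto_right x) (Filter.Eventually.of_forall fun n => ?_)
      rw [← Hh (x + 1 / ((n : ℝ) + 1))]
      exact hlh x _ (lt_add_of_pos_right x (by positivity))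
    · rw [← Hh x]
      refine mono (fun α hα => ?_)
      have hα' : vt α < x := hα
      exact le_of_lt hα'
  have claimB : (∀ x : ℝ, (haarP (closure (polyadicEmb '' {n | v n < x}))).toReal = F x) →
      ∀ x : ℝ, (haarP {α | vt α < x}).toReal = F x := by
    intro Hg x
    apply le_antisymm
    · rw [← Hg x]; exact hle1 x
    · refine le_of_tendsto (tendsto_left x) (Filter.Eventually.of_forall fun n => ?_)
      rw [← Hg (x - 1 / ((n : ℝ) + 1))]
      exact le_trans (hle2 _) (hlh _ x (sub_lt_self x (by positivity)))
  have claimHg : (∀ x : ℝ, (haarP {α | vt α < x}).toReal = F x) →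
      (∀ x : ℝ, (haarP (closure (polyadicEmb '' {n | v n < x}))).toReal = F x) ∧
      (∀ x : ℝ, (haarP (closure (polyadicEmb '' {n | v n < x}ᶜ))).toReal = 1 - F x) := by
    intro Hh
    have Hl := claimA Hh
    constructor
    · intro x
      apply le_antisymm
      · rw [← Hl x]; exact hle2 x
      · rw [← Hh x]; exact hle1 x
    · intro x
      apply le_antisymm
      · have h1 := mono (closure_compl_subset_ge hvt hext x)
        have he : {α | x ≤ vt α} = {α | vt α < x}ᶜ := by ext α; simp [not_lt]
        rw [he, hcompl (meas_lt x), Hh x] at h1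
        exact h1
      · have h1 := mono (gt_subset_closure_compl hvt hext x)
        have he : {α | x < vt α} = {α | vt α ≤ x}ᶜ := by ext α; simp [not_le]
        rw [he, hcompl (meas_le x), Hl x] at h1
        exact h1
  have pack : (∀ x : ℝ, (haarP {α | vt α < x}).toReal = F x) →
      ∀ x : ℝ, BuckMeasurableSet {n | v n < x} ∧ buckOuter {n | v n < x} = F x := by
    intro Hh x
    obtain ⟨Hg, Hgc⟩ := claimHg Hh
    constructor
    · show buckOuter {n | v n < x} + buckOuter {n | v n < x}ᶜ = 1
      rw [buckOuter_eq_haarP_closure, buckOuter_eq_haarP_closure, Hg x, Hgc x]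
      ring
    · rw [buckOuter_eq_haarP_closure]; exact Hg x
  have unpack : (∀ x : ℝ, buckOuter {n | v n < x} = F x) →
      ∀ x : ℝ, (haarP {α | vt α < x}).toReal = F x := by
    intro Hb
    apply claimB
    intro x
    rw [← buckOuter_eq_haarP_closure]
    exact Hb x
  constructor
  · constructor
    · exact pack
    · intro Hrhs
      exact unpack (fun x => (Hrhs x).2)
  · constructor
    · intro Hrhs x
      exact (Hrhs x).2
    · intro Hb
      exact pack (unpack Hb)
end
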